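/- arXiv:2512.17606 — 6 statements merged into one kernel-verified Lean document; each statement's English description precedes it below -/
import Mathlib

section
/- Let A ⊆ ℝ^d be closed and 0 < r < ∞. Then reach A ≥ r if and only if for all a, b ∈ A, dist(b − a, Tan(A,a)) ≤ |b−a|²/(2r). -/
open Metric Set MeasureTheory
open scoped RealInnerProductSpace ENNReal NNReal

noncomputable section

abbrev Euc (d : ℕ) := EuclideanSpace ℝ (Fin d)

/-- Points of the ambient space having a unique nearest point in `A`. -/
def unp {d : ℕ} (A : Set (Euc d)) : Set (Euc d) :=
  {x | ∃! a, a ∈ A ∧ dist x a = Metric.infDist x A}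

/-- Federer's local reach `reach (A, a)`. -/
def reachAt {d : ℕ} (A : Set (Euc d)) (a : Euc d) : ℝ≥0∞ :=
  sSup {r : ℝ≥0∞ | ∀ x : Euc d, edist x a < r → x ∈ unp A}

/-- Federer's reach of a set. -/
def reach {d : ℕ} (A : Set (Euc d)) : ℝ≥0∞ := ⨅ a ∈ A, reachAt A a

/-- The tangent cone of `A` at `a`: `u` is a tangent vector iff `u = 0` or `u` is a limit of
`r i • (x i - a)` with `x i ∈ A \ {a}`, `x i → a`, `r i > 0`. -/
def tanCone {d : ℕ} (A : Set (Euc d)) (a : Euc d) : Set (Euc d) :=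
  {u | u = 0 ∨ ∃ (x : ℕ → Euc d) (r : ℕ → ℝ),
    (∀ n, x n ∈ A ∧ x n ≠ a) ∧
    Filter.Tendsto x Filter.atTop (nhds a) ∧
    (∀ n, 0 < r n) ∧
    Filter.Tendsto (fun n => r n • (x n - a)) Filter.atTop (nhds u)}

/-- The dimension of the tangent cone of `A` at `a`. -/
def tanDim {d : ℕ} (A : Set (Euc d)) (a : Euc d) : ℕ :=
  Module.finrank ℝ (Submodule.span ℝ (tanCone A a))

/-- The set of points of `A` at which the tangent cone has dimension `k`. -/
def Tk {d : ℕ} (A : Set (Euc d)) (k : ℕ) : Set (Euc d) :=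
  {x | x ∈ A ∧ tanDim A x = k}

/-- Whitney's fullness `Θ(σ) = vol_k(σ) / (diam σ)^k` of a set. -/
def fullness {d : ℕ} (k : ℕ) (s : Set (Euc d)) : ℝ :=
  (μH[(k : ℝ)] s).toReal / (Metric.diam s) ^ k

/-- The metric `ρ_k` on the Grassmannian of subspaces of `ℝ^d`. -/
def grassDist {d : ℕ} (U V : Submodule ℝ (Euc d)) : ℝ :=
  max (sSup ((fun u => Metric.infDist u (V : Set (Euc d))) '' {u | u ∈ U ∧ ‖u‖ = 1}))
      (sSup ((fun v => Metric.infDist v (U : Set (Euc d))) '' {v | v ∈ V ∧ ‖v‖ = 1}))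


/-!
Below distance `r` from `A` nearest points are unique, so the nearest point map `P` is continuous
there. Pushing a point `x` straight away from `P x`, each short step gains almost its full length
in distance to `A`; hence for every `D < r` one reaches a point `w` at distance `D` from `A` on the
normal ray through `x`, and the empty ball `B(w, D)` gives the proximal normal inequality
`r ⟪x - P x, y - P x⟫ ≤ d(x, A) ‖y - P x‖² / 2` for `y ∈ A`. At `x = a + t (b - a)` this makes
`(P x - a) / t` approximate `b - a` up to `(1 + 4t) ‖b - a‖² / (2r)`, and a limit point as `t → 0`
is a tangent vector at `a`.

Conversely, if `x` at distance `δ < r` had nearest points `p ≠ q`, then `x - q` is normal to `A`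
at `q`, so `‖p - q‖² / 2 ≤ ⟪x - q, p - q - u⟫ ≤ δ ‖p - q - u‖` for every tangent vector `u` at `q`,
contradicting the hypothesis for the pair `(q, p)`.
-/

open Filter Topology

section InnerProductGeometry

variable {E : Type*} [NormedAddCommGroup E] [InnerProductSpace ℝ E]

theorem two_inner_le_norm_sq_of_norm_le {z c y : E} (h : ‖z - c‖ ≤ ‖z - y‖) :
    2 * ⟪z - c, y - c⟫ ≤ ‖y - c‖ ^ 2 := by
  have hexp : ‖z - y‖ ^ 2 = ‖z - c‖ ^ 2 - 2 * ⟪z - c, y - c⟫ + ‖y - c‖ ^ 2 := by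
    rw [← norm_sub_sq_real, sub_sub_sub_cancel_right]
  nlinarith [pow_le_pow_left₀ (norm_nonneg _) h 2]

theorem sq_norm_add_smul_sub_ge {z c q : E} {t : ℝ} (hq : ‖z - c‖ ≤ ‖z - q‖) (ht : 0 ≤ t) :
    (1 + t) ^ 2 * ‖z - c‖ ^ 2 - t * ‖q - c‖ ^ 2 ≤ ‖z + t • (z - c) - q‖ ^ 2 := by
  have hexp : ‖z + t • (z - c) - q‖ ^ 2
      = (1 + t) ^ 2 * ‖z - c‖ ^ 2 - (1 + t) * (2 * ⟪z - c, q - c⟫) + ‖q - c‖ ^ 2 := by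
    rw [show z + t • (z - c) - q = (1 + t) • (z - c) - (q - c) by module, norm_sub_sq_real,
      norm_smul, real_inner_smul_left, Real.norm_of_nonneg (by linarith)]
    ring
  nlinarith [two_inner_le_norm_sq_of_norm_le hq]

/-- Equality in the triangle inequality for `c`, `x`, `w` puts `w` on the ray from `c` through `x`,
at distance `D` from `c`; the ball of radius `D` around `w` then keeps `y` away. -/
theorem mul_inner_le_of_norm_le_sub {x c w y : E} {D : ℝ} (hw : ‖w - x‖ ≤ D - ‖x - c‖)
    (hwc : D ≤ ‖w - c‖) (hwy : D ≤ ‖w - y‖) :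
    D * ⟪x - c, y - c⟫ ≤ ‖x - c‖ * ‖y - c‖ ^ 2 / 2 := by
  have hwc' : ‖w - c‖ = D := by
    refine le_antisymm ?_ hwc
    calc ‖w - c‖ = ‖(w - x) + (x - c)‖ := by rw [sub_add_sub_cancel]
      _ ≤ ‖w - x‖ + ‖x - c‖ := norm_add_le _ _
      _ ≤ D := by linarith
  have hD : 0 ≤ D := hwc' ▸ norm_nonneg _
  have hinner : D * ‖x - c‖ ≤ ⟪w - c, x - c⟫ := by
    have hsq : ‖(w - c) - (x - c)‖ ^ 2 ≤ (D - ‖x - c‖) ^ 2 := by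
      rw [sub_sub_sub_cancel_right]
      exact pow_le_pow_left₀ (norm_nonneg _) hw 2
    rw [norm_sub_sq_real, hwc'] at hsq
    nlinarith
  have hray : ‖x - c‖ • (w - c) = D • (x - c) := by
    rw [← sub_eq_zero, ← norm_eq_zero, ← sq_eq_zero_iff (M₀ := ℝ)]
    refine le_antisymm ?_ (sq_nonneg _)
    rw [norm_sub_sq_real, norm_smul, norm_smul, real_inner_smul_left, real_inner_smul_right,
      hwc', Real.norm_of_nonneg (norm_nonneg _), Real.norm_of_nonneg hD]
    nlinarith [mul_le_mul_of_nonneg_left hinner (mul_nonneg (norm_nonneg (x - c)) hD)]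
  have hy : 2 * ⟪w - c, y - c⟫ ≤ ‖y - c‖ ^ 2 :=
    two_inner_le_norm_sq_of_norm_le (hwc'.trans_le hwy)
  calc D * ⟪x - c, y - c⟫ = ‖x - c‖ * ⟪w - c, y - c⟫ := by
        rw [← real_inner_smul_left, ← hray, real_inner_smul_left]
    _ ≤ ‖x - c‖ * ‖y - c‖ ^ 2 / 2 := by nlinarith [norm_nonneg (x - c)]

end InnerProductGeometry

section NearestPointMap

variable {α : Type*} [PseudoMetricSpace α]

def IsNearestPointMap (A : Set α) (P : α → α) : Prop :=
  ∀ x, P x ∈ A ∧ dist x (P x) = infDist x A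

theorem IsClosed.exists_isNearestPointMap [ProperSpace α] {A : Set α} (hA : IsClosed A)
    (hne : A.Nonempty) : ∃ P, IsNearestPointMap A P := by
  choose P hPA hP using fun x => hA.exists_infDist_eq_dist hne x
  exact ⟨P, fun x => ⟨hPA x, (hP x).symm⟩⟩

variable {A : Set α} {P : α → α}

theorem IsNearestPointMap.continuousAt [ProperSpace α] (hP : IsNearestPointMap A P)
    (hA : IsClosed A) {z : α} (huniq : ∀ p ∈ A, dist z p = infDist z A → p = P z) :
    ContinuousAt P z := by
  have hnear : ∀ ε > 0, ∀ᶠ x in 𝓝 z, P x ∈ closedBall z (infDist z A + ε) := by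
    intro ε hε
    filter_upwards [ball_mem_nhds z (half_pos hε)] with x hx
    rw [mem_ball] at hx
    rw [mem_closedBall]
    calc dist (P x) z ≤ dist (P x) x + dist x z := dist_triangle _ _ _
      _ = infDist x A + dist x z := by rw [dist_comm, (hP x).2]
      _ ≤ infDist z A + ε := by linarith [infDist_le_infDist_add_dist (x := x) (y := z) (s := A)]
  refine (isCompact_closedBall z (infDist z A + 1)).tendsto_nhds_of_unique_mapClusterPt
    (hnear 1 one_pos) fun p _ hp => ?_
  have hpA : p ∈ A := hA.mem_of_mapClusterPt hp (Eventually.of_forall fun x => (hP x).1)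
  refine huniq p hpA (le_antisymm ?_ (infDist_le_dist_of_mem hpA))
  refine le_of_forall_pos_le_add fun ε hε => ?_
  simpa only [mem_closedBall, dist_comm] using
    isClosed_closedBall.mem_of_mapClusterPt hp (hnear ε hε)

end NearestPointMap

section NormalPush

variable {E : Type*} [NormedAddCommGroup E] [InnerProductSpace ℝ E] {A : Set E} {P : E → E}

theorem IsNearestPointMap.dist_push_eq (hP : IsNearestPointMap A P) {w : E}
    (hw : 0 < infDist w A) {h : ℝ} (hh : 0 ≤ h) :
    dist (w + (h / infDist w A) • (w - P w)) w = h := by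
  rw [dist_eq_norm, add_sub_cancel_left, norm_smul, ← dist_eq_norm, (hP w).2,
    Real.norm_of_nonneg (by positivity), div_mul_cancel₀ _ hw.ne']

/-- A step straight away from the nearest point gains almost its full length because, by
continuity, the nearest point moves only a little. -/
theorem IsNearestPointMap.exists_infDist_add_le_push (hP : IsNearestPointMap A P) {w : E}
    (hw : 0 < infDist w A) (hcont : ContinuousAt P w) {ε : ℝ} (hε : 0 < ε) (hε1 : ε ≤ 1) :
    ∃ η > 0, ∀ h ∈ Ioo 0 η,
      infDist w A + (1 - ε) * h ≤ infDist (w + (h / infDist w A) • (w - P w)) A := by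
  set δ := infDist w A
  obtain ⟨η, hη, hPη⟩ := Metric.continuousAt_iff.1 hcont (ε * δ) (by positivity)
  refine ⟨η, hη, fun h ⟨hh, hhη⟩ => ?_⟩
  set w' := w + (h / δ) • (w - P w)
  have hρ : ‖P w' - P w‖ < ε * δ := by
    rw [← dist_eq_norm]; exact hPη ((hP.dist_push_eq hw hh.le).trans_lt hhη)
  have hnorm : ‖w - P w‖ = δ := by rw [← dist_eq_norm, (hP w).2]
  have hfar : ‖w - P w‖ ≤ ‖w - P w'‖ := by
    rw [hnorm, ← dist_eq_norm]; exact infDist_le_dist_of_mem (hP w').1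
  have key : (δ + h) ^ 2 - h / δ * ‖P w' - P w‖ ^ 2 ≤ ‖w' - P w'‖ ^ 2 := by
    have := sq_norm_add_smul_sub_ge hfar (t := h / δ) (by positivity)
    rwa [hnorm, show (1 + h / δ) ^ 2 * δ ^ 2 = (δ + h) ^ 2 by field_simp] at this
  have hρ2 : h / δ * ‖P w' - P w‖ ^ 2 ≤ h * ε ^ 2 * δ := by
    calc h / δ * ‖P w' - P w‖ ^ 2 ≤ h / δ * (ε * δ) ^ 2 := by gcongr
      _ = h * ε ^ 2 * δ := by field_simp
  have hgain : (δ + (1 - ε) * h) ^ 2 ≤ (δ + h) ^ 2 - h * ε ^ 2 * δ := by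
    nlinarith [mul_pos (mul_pos hh hε) hw, mul_pos (mul_pos hh hε) hh,
      mul_nonneg (sub_nonneg.2 hε1) (mul_pos (mul_pos hh hε) hw).le,
      mul_nonneg (sub_nonneg.2 hε1) (mul_pos (mul_pos hh hε) hh).le]
  rw [show infDist w' A = ‖w' - P w'‖ by rw [← dist_eq_norm, (hP w').2],
    ← pow_le_pow_iff_left₀ (by nlinarith) (norm_nonneg _) two_ne_zero]
  linarith

variable [ProperSpace E] {r : ℝ}

/-- Continuous induction on the length `s` of the path travelled away from `A`. -/
theorem IsNearestPointMap.exists_infDist_ge_sub_mul (hP : IsNearestPointMap A P)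
    (hcont : ∀ x, infDist x A < r → ContinuousAt P x) {x : E} (hx : 0 < infDist x A)
    {L : ℝ} (hL : 0 ≤ L) (hLr : infDist x A + L < r) {ε : ℝ} (hε : 0 < ε) (hε1 : ε ≤ 1) :
    ∃ w ∈ closedBall x L, infDist x A + (1 - ε) * L ≤ infDist w A := by
  set S := {s : ℝ | ∃ w ∈ closedBall x s, infDist x A + (1 - ε) * s ≤ infDist w A}
  suffices Icc 0 L ⊆ S from this ⟨hL, le_rfl⟩
  refine IsClosed.Icc_subset_of_forall_mem_nhdsWithin ?_ ⟨x, mem_closedBall_self le_rfl, by simp⟩ ?_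
  · set K := {p : ℝ × E | p.1 ∈ Icc 0 L ∧ dist p.2 x ≤ p.1 ∧
      infDist x A + (1 - ε) * p.1 ≤ infDist p.2 A}
    have hKc : IsClosed K :=
      (isClosed_Icc.preimage continuous_fst).inter
        ((isClosed_le (by fun_prop) continuous_fst).inter
          (isClosed_le (by fun_prop) ((continuous_infDist_pt A).comp continuous_snd)))
    have hK : IsCompact K := (isCompact_Icc.prod (isCompact_closedBall x L)).of_isClosed_subset
      hKc fun p hp => ⟨hp.1, hp.2.1.trans hp.1.2⟩
    have hSK : S ∩ Icc 0 L = Prod.fst '' K := by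
      ext s
      constructor
      · rintro ⟨⟨w, hw, hs⟩, hsL⟩
        exact ⟨(s, w), ⟨hsL, hw, hs⟩, rfl⟩
      · rintro ⟨⟨s, w⟩, ⟨hsL, hw, hs⟩, rfl⟩
        exact ⟨⟨w, hw, hs⟩, hsL⟩
    rw [hSK]
    exact (hK.image continuous_fst).isClosed
  · rintro s ⟨⟨w, hw, hs⟩, hs0, hsL⟩
    rw [mem_closedBall] at hw
    have hw0 : 0 < infDist w A := by nlinarith
    have hwr : infDist w A < r := by
      linarith [infDist_le_infDist_add_dist (x := w) (y := x) (s := A)]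
    obtain ⟨η, hη, hpush⟩ := hP.exists_infDist_add_le_push hw0 (hcont w hwr) hε hε1
    filter_upwards [Ioo_mem_nhdsGT (show s < s + η by linarith)] with s' ⟨hs', hs'η⟩
    refine ⟨w + ((s' - s) / infDist w A) • (w - P w), ?_, ?_⟩
    · rw [mem_closedBall]
      linarith [dist_triangle (w + ((s' - s) / infDist w A) • (w - P w)) w x,
        hP.dist_push_eq hw0 (sub_nonneg.2 hs'.le)]
    · linarith [hpush (s' - s) ⟨by linarith, by linarith⟩]

theorem IsNearestPointMap.exists_infDist_ge_add (hP : IsNearestPointMap A P)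
    (hcont : ∀ x, infDist x A < r → ContinuousAt P x) {x : E} (hx : 0 < infDist x A)
    {L : ℝ} (hL : 0 ≤ L) (hLr : infDist x A + L < r) :
    ∃ w ∈ closedBall x L, infDist x A + L ≤ infDist w A := by
  obtain ⟨w, hw, hmax⟩ := (isCompact_closedBall x L).exists_isMaxOn
    (nonempty_closedBall.2 hL) (continuous_infDist_pt A).continuousOn
  have hlim : Tendsto (fun ε : ℝ => infDist x A + (1 - ε) * L) (𝓝[>] 0)
      (𝓝 (infDist x A + L)) := by
    have : Continuous fun ε : ℝ => infDist x A + (1 - ε) * L := by fun_prop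
    simpa using (this.tendsto 0).mono_left nhdsWithin_le_nhds
  refine ⟨w, hw, le_of_tendsto hlim ?_⟩
  filter_upwards [Ioc_mem_nhdsGT one_pos] with ε ⟨hε, hε1⟩
  obtain ⟨w', hw', hle⟩ := hP.exists_infDist_ge_sub_mul hcont hx hL hLr hε hε1
  exact hle.trans (hmax hw')

/-- Federer's 4.8(7): `A` misses the open ball of radius `r` centred at
`P x + (r / ‖x - P x‖) • (x - P x)`. -/
theorem IsNearestPointMap.mul_inner_le (hP : IsNearestPointMap A P)
    (hcont : ∀ x, infDist x A < r → ContinuousAt P x) {x y : E} (hx : infDist x A < r)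
    (hy : y ∈ A) : r * ⟪x - P x, y - P x⟫ ≤ infDist x A * ‖y - P x‖ ^ 2 / 2 := by
  have hnorm : ‖x - P x‖ = infDist x A := by rw [← dist_eq_norm, (hP x).2]
  rcases (infDist_nonneg (x := x) (s := A)).eq_or_lt with h0 | h0
  · simp [norm_eq_zero.1 (hnorm.trans h0.symm), ← h0]
  set S := {D : ℝ | D * ⟪x - P x, y - P x⟫ ≤ infDist x A * ‖y - P x‖ ^ 2 / 2}
  have hS : IsClosed S := isClosed_le (by fun_prop) continuous_const
  suffices Ico (infDist x A) r ⊆ S by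
    have := hS.closure_subset_iff.2 this
    rw [closure_Ico hx.ne] at this
    exact this ⟨hx.le, le_rfl⟩
  rintro D ⟨hD1, hD2⟩
  obtain ⟨w, hw, hwA⟩ := hP.exists_infDist_ge_add hcont h0 (sub_nonneg.2 hD1) (by linarith)
  rw [mem_closedBall, dist_eq_norm] at hw
  show D * ⟪x - P x, y - P x⟫ ≤ _
  rw [← hnorm]
  refine mul_inner_le_of_norm_le_sub (by rwa [hnorm]) ?_ ?_
  · rw [← dist_eq_norm]; linarith [infDist_le_dist_of_mem (x := w) (hP x).1]
  · rw [← dist_eq_norm]; linarith [infDist_le_dist_of_mem (x := w) hy]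

theorem IsNearestPointMap.norm_sub_inv_smul_le (hP : IsNearestPointMap A P) (hr : 0 < r)
    (hcont : ∀ x, infDist x A < r → ContinuousAt P x) {a b : E} (ha : a ∈ A) (hb : b ∈ A)
    {t : ℝ} (ht : 0 < t) (ht1 : t ≤ 1) (htr : t * ‖b - a‖ < r) :
    ‖(b - a) - t⁻¹ • (P (a + t • (b - a)) - a)‖ ≤ (1 + 4 * t) * ‖b - a‖ ^ 2 / (2 * r) := by
  set x := a + t • (b - a)
  set c := P x
  set δ := infDist x A
  have hxa : ‖x - a‖ = t * ‖b - a‖ := by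
    rw [add_sub_cancel_left, norm_smul, Real.norm_of_nonneg ht.le]
  have hxc : ‖x - c‖ = δ := by rw [← dist_eq_norm, (hP x).2]
  have hδ : δ ≤ t * ‖b - a‖ := hxa ▸ dist_eq_norm x a ▸ infDist_le_dist_of_mem ha
  have hac : ‖a - c‖ ≤ 2 * t * ‖b - a‖ := by
    calc ‖a - c‖ ≤ ‖a - x‖ + ‖x - c‖ := norm_sub_le_norm_sub_add_norm_sub a x c
      _ ≤ 2 * t * ‖b - a‖ := by rw [norm_sub_rev, hxa, hxc]; linarith
  have hbc : ‖b - c‖ ≤ ‖b - a‖ := by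
    have hbx : ‖b - x‖ = (1 - t) * ‖b - a‖ := by
      rw [show b - x = (1 - t) • (b - a) by module, norm_smul, Real.norm_of_nonneg (by linarith)]
    calc ‖b - c‖ ≤ ‖b - x‖ + ‖x - c‖ := norm_sub_le_norm_sub_add_norm_sub b x c
      _ ≤ ‖b - a‖ := by rw [hbx, hxc]; linarith
  have hid : δ ^ 2 = (1 - t) * ⟪x - c, a - c⟫ + t * ⟪x - c, b - c⟫ := by
    rw [← hxc, ← real_inner_self_eq_norm_sq, ← real_inner_smul_right, ← real_inner_smul_right,
      ← inner_add_right]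
    congr 1
    module
  have hδr : δ < r := hδ.trans_lt htr
  have hpa := hP.mul_inner_le hcont hδr ha
  have hpb := hP.mul_inner_le hcont hδr hb
  have hsq : r * δ ^ 2 ≤ δ * (t * (1 + 4 * t) * ‖b - a‖ ^ 2) / 2 := by
    have hac2 := pow_le_pow_left₀ (norm_nonneg _) hac 2
    have hbc2 := pow_le_pow_left₀ (norm_nonneg _) hbc 2
    have hδ0 : 0 ≤ δ := infDist_nonneg
    calc r * δ ^ 2 = (1 - t) * (r * ⟪x - c, a - c⟫) + t * (r * ⟪x - c, b - c⟫) := by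
          rw [hid]; ring
      _ ≤ (1 - t) * (δ * ‖a - c‖ ^ 2 / 2) + t * (δ * ‖b - c‖ ^ 2 / 2) := by
          gcongr
      _ ≤ (1 - t) * (δ * (2 * t * ‖b - a‖) ^ 2 / 2) + t * (δ * ‖b - a‖ ^ 2 / 2) := by
          gcongr
      _ ≤ δ * (t * (1 + 4 * t) * ‖b - a‖ ^ 2) / 2 := by
          nlinarith [mul_nonneg (mul_nonneg hδ0 (sq_nonneg (2 * t * ‖b - a‖))) ht.le]
  have hquot : t⁻¹ • (x - c) = (b - a) - t⁻¹ • (c - a) := by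
    rw [show x - c = t • (b - a) - (c - a) by simp only [x]; abel, smul_sub, smul_smul,
      inv_mul_cancel₀ ht.ne', one_smul]
  rw [← hquot, norm_smul, hxc, Real.norm_of_nonneg (by positivity), inv_mul_le_iff₀ ht,
    mul_div_assoc', le_div_iff₀ (by positivity)]
  rcases (infDist_nonneg : 0 ≤ δ).eq_or_lt with h0 | h0
  · rw [show δ = 0 from h0.symm, zero_mul]; positivity
  · nlinarith

end NormalPush

section TangentCone

variable {d : ℕ} {A : Set (Euc d)}

theorem zero_mem_tanCone (A : Set (Euc d)) (a : Euc d) : (0 : Euc d) ∈ tanCone A a :=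
  Or.inl rfl

theorem mem_tanCone_of_tendsto {a u : Euc d} {c : ℕ → Euc d} {t : ℕ → ℝ} (hc : ∀ n, c n ∈ A)
    (ht : ∀ n, 0 < t n) (ht0 : Tendsto t atTop (𝓝 0))
    (hu : Tendsto (fun n => (t n)⁻¹ • (c n - a)) atTop (𝓝 u)) : u ∈ tanCone A a := by
  rcases eq_or_ne u 0 with rfl | hu0
  · exact zero_mem_tanCone A a
  obtain ⟨N, hN⟩ := eventually_atTop.1 (hu.eventually_ne hu0)
  have hca : Tendsto c atTop (𝓝 a) := by
    have := (ht0.smul hu).add_const a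
    rw [zero_smul, zero_add] at this
    refine this.congr fun n => ?_
    rw [smul_smul, mul_inv_cancel₀ (ht n).ne', one_smul, sub_add_cancel]
  refine Or.inr ⟨fun n => c (n + N), fun n => (t (n + N))⁻¹,
    fun n => ⟨hc _, fun h => hN (n + N) (Nat.le_add_left N n) (by simp [h])⟩,
    hca.comp (tendsto_add_atTop_nat N), fun n => inv_pos.2 (ht _),
    hu.comp (tendsto_add_atTop_nat N)⟩

theorem infDist_tanCone_le_of_tendsto {a v : Euc d} {c : ℕ → Euc d} {t g : ℕ → ℝ} {L : ℝ}
    (hc : ∀ n, c n ∈ A) (ht : ∀ n, 0 < t n) (ht0 : Tendsto t atTop (𝓝 0))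
    (hg : Tendsto g atTop (𝓝 L)) (hle : ∀ᶠ n in atTop, ‖v - (t n)⁻¹ • (c n - a)‖ ≤ g n) :
    infDist v (tanCone A a) ≤ L := by
  have hbd : ∀ᶠ n in atTop, (t n)⁻¹ • (c n - a) ∈ closedBall v (L + 1) := by
    filter_upwards [hle, hg.eventually (gt_mem_nhds (lt_add_one L))] with n h1 h2
    rw [mem_closedBall, dist_comm, dist_eq_norm]
    linarith
  obtain ⟨w, -, φ, hφ, hw⟩ :=
    tendsto_subseq_of_frequently_bounded isBounded_closedBall hbd.frequently
  have hwT : w ∈ tanCone A a :=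
    mem_tanCone_of_tendsto (fun n => hc (φ n)) (fun n => ht (φ n)) (ht0.comp hφ.tendsto_atTop) hw
  calc infDist v (tanCone A a) ≤ dist v w := infDist_le_dist_of_mem hwT
    _ ≤ L := by
      rw [dist_eq_norm]
      exact le_of_tendsto_of_tendsto (tendsto_const_nhds.sub hw).norm
        (hg.comp hφ.tendsto_atTop) (hφ.tendsto_atTop.eventually hle)

theorem inner_nonpos_of_mem_tanCone {x p u : Euc d} (hmin : ∀ q ∈ A, dist x p ≤ dist x q)
    (hu : u ∈ tanCone A p) : ⟪x - p, u⟫ ≤ 0 := by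
  rcases hu with rfl | ⟨y, s, hy, hyp, hs, hlim⟩
  · simp
  have key : ∀ n, ⟪x - p, s n • (y n - p)⟫ ≤ ‖s n • (y n - p)‖ * ‖y n - p‖ / 2 := by
    intro n
    have h := two_inner_le_norm_sq_of_norm_le (z := x) (c := p) (y := y n)
      (by simpa only [dist_eq_norm] using hmin _ (hy n).1)
    rw [real_inner_smul_right, norm_smul, Real.norm_of_nonneg (hs n).le]
    nlinarith [(hs n).le]
  have hlim0 : Tendsto (fun n => ‖s n • (y n - p)‖ * ‖y n - p‖ / 2) atTop (𝓝 0) := by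
    simpa using (hlim.norm.mul (tendsto_sub_nhds_zero_iff.2 hyp).norm).div_const 2
  exact le_of_tendsto_of_tendsto (tendsto_const_nhds.inner hlim) hlim0 (Eventually.of_forall key)

theorem sq_div_le_infDist_tanCone {x p q : Euc d} (hmin : ∀ y ∈ A, dist x q ≤ dist x y)
    (hp : ‖x - p‖ ≤ ‖x - q‖) (hxq : 0 < ‖x - q‖) :
    ‖p - q‖ ^ 2 / (2 * ‖x - q‖) ≤ infDist (p - q) (tanCone A q) := by
  rw [le_infDist ⟨0, zero_mem_tanCone A q⟩]
  intro u hu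
  have hexp := norm_sub_sq_real (x - q) (p - q)
  rw [sub_sub_sub_cancel_right] at hexp
  have hnormal := inner_nonpos_of_mem_tanCone hmin hu
  have hcs := real_inner_le_norm (x - q) ((p - q) - u)
  rw [inner_sub_right] at hcs
  rw [div_le_iff₀ (by positivity), dist_eq_norm]
  nlinarith [pow_le_pow_left₀ (norm_nonneg _) hp 2]

end TangentCone

section Reach

variable {d : ℕ} {A : Set (Euc d)} {r : ℝ}

theorem ofReal_le_reach_iff (hne : A.Nonempty) :
    ENNReal.ofReal r ≤ reach A ↔ ∀ x, infDist x A < r → x ∈ unp A := by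
  simp only [reach, reachAt, le_iInf₂_iff]
  constructor
  · intro H x hx
    obtain ⟨a, ha, hxa⟩ := (infDist_lt_iff hne).1 hx
    obtain ⟨s, hs, hlt⟩ := lt_sSup_iff.1 ((edist_lt_ofReal.2 hxa).trans_le (H a ha))
    exact hs x hlt
  · intro H a ha
    exact le_sSup fun x hx => H x ((infDist_le_dist_of_mem ha).trans_lt (edist_lt_ofReal.1 hx))

theorem infDist_tanCone_le_of_forall_mem_unp (hA : IsClosed A) (hne : A.Nonempty) (hr : 0 < r)
    (H : ∀ x, infDist x A < r → x ∈ unp A) {a b : Euc d} (ha : a ∈ A) (hb : b ∈ A) :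
    infDist (b - a) (tanCone A a) ≤ ‖b - a‖ ^ 2 / (2 * r) := by
  obtain ⟨P, hP⟩ := hA.exists_isNearestPointMap hne
  have hcont : ∀ x, infDist x A < r → ContinuousAt P x := fun x hx =>
    hP.continuousAt hA fun p hp hxp => (H x hx).unique ⟨hp, hxp⟩ (hP x)
  set t : ℕ → ℝ := fun n => 1 / (n + 1)
  have ht0 : Tendsto t atTop (𝓝 0) := tendsto_one_div_add_atTop_nhds_zero_nat
  refine infDist_tanCone_le_of_tendsto (c := fun n => P (a + t n • (b - a)))
    (g := fun n => (1 + 4 * t n) * ‖b - a‖ ^ 2 / (2 * r))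
    (fun n => (hP _).1) (fun n => by positivity) ht0 ?_ ?_
  · simpa using (((ht0.const_mul 4).const_add 1).mul_const (‖b - a‖ ^ 2)).div_const (2 * r)
  · have htr : ∀ᶠ n in atTop, t n * ‖b - a‖ < r :=
      (ht0.mul_const _).eventually (gt_mem_nhds (by simpa using hr))
    filter_upwards [htr] with n hn
    exact hP.norm_sub_inv_smul_le hr hcont ha hb (by positivity)
      (div_le_one_of_le₀ (by simp) (by positivity)) hn

theorem mem_unp_of_forall_infDist_tanCone_le (hA : IsClosed A) (hne : A.Nonempty)
    (H : ∀ a ∈ A, ∀ b ∈ A, infDist (b - a) (tanCone A a) ≤ ‖b - a‖ ^ 2 / (2 * r))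
    {x : Euc d} (hx : infDist x A < r) : x ∈ unp A := by
  obtain ⟨p, hp, hxp⟩ := hA.exists_infDist_eq_dist hne x
  refine ⟨p, ⟨hp, hxp.symm⟩, fun q ⟨hq, hxq⟩ => ?_⟩
  rcases (infDist_nonneg (x := x) (s := A)).eq_or_lt with h0 | h0
  · rw [← h0] at hxp hxq
    exact (dist_eq_zero.1 hxq).symm.trans (dist_eq_zero.1 hxp.symm)
  suffices ‖p - q‖ ^ 2 = 0 by
    rw [sq_eq_zero_iff, norm_eq_zero, sub_eq_zero] at this
    exact this.symm
  by_contra hpq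
  have hlow := sq_div_le_infDist_tanCone (x := x) (p := p) (q := q)
    (fun y hy => hxq ▸ infDist_le_dist_of_mem hy)
    (by rw [← dist_eq_norm, ← dist_eq_norm, hxq, ← hxp])
    (by rwa [← dist_eq_norm, hxq])
  rw [← dist_eq_norm x q, hxq] at hlow
  have hshrink : ‖p - q‖ ^ 2 / (2 * r) < ‖p - q‖ ^ 2 / (2 * infDist x A) :=
    div_lt_div_of_pos_left (lt_of_le_of_ne (sq_nonneg _) (Ne.symm hpq)) (by positivity)
      (by linarith)
  exact (hlow.trans (H q hq p hp)).not_gt hshrink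

end Reach

theorem stmt3 {d : ℕ} (A : Set (Euc d)) (hA : IsClosed A) (r : ℝ) (hr : 0 < r) :
    ENNReal.ofReal r ≤ reach A ↔
      ∀ a ∈ A, ∀ b ∈ A, Metric.infDist (b - a) (tanCone A a) ≤ ‖b - a‖ ^ 2 / (2 * r) := by
  rcases A.eq_empty_or_nonempty with rfl | hne
  · simp [reach]
  rw [ofReal_le_reach_iff hne]
  exact ⟨fun H a ha b hb => infDist_tanCone_le_of_forall_mem_unp hA hne hr H ha hb,
    fun H x hx => mem_unp_of_forall_infDist_tanCone_le hA hne H hx⟩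
end
end

section
/- Let A ⊆ ℝ^d, 0 < r < reach A, and a, b ∈ A with 0 < |b−a| < r. Then there exists a nonzero vector v ∈ Tan(A,a) such that the angle between b−a and v is less than (π/6)·(|b−a|/r). -/
open Metric Set MeasureTheory
open scoped RealInnerProductSpace ENNReal NNReal

noncomputable section

/-! Federer's normal inequality: if `infDist x A < r` and `p` is the nearest point of `A` to
`x`, then `⟪x - p, c - p⟫ * (2 * r) ≤ ‖x - p‖ * ‖c - p‖ ^ 2` for all `c ∈ A`. The distance
function grows at unit rate along the normal `x - p` (a maximisation over balls, using the
continuity of the nearest-point map), so for every `τ < r` the open ball of radius `τ` about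
`p + τ • (x - p) / ‖x - p‖` misses `A`; expanding `τ ≤ ‖y - c‖` gives the inequality.

Applied to the nearest point `p` of `a + t • (b - a)` and to `c = a, b`, it makes `(p - a) / t`
a secant direction within `‖b - a‖ ^ 2 * (1 + 4 t) / (2 r)` of `b - a`, and letting `t → 0`
yields `w ∈ Tan(A, a)` with `‖w - (b - a)‖ ≤ ‖b - a‖ ^ 2 / (2 r)`. Hence
`sin ∠(b - a, w) ≤ κ := ‖b - a‖ / (2 r) < 1 / 2`, and concavity of `sin` on `[0, π / 6]` turns
this into `∠(b - a, w) < π / 3 * κ`. -/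

open Filter Topology InnerProductGeometry Real

lemma three_div_pi_mul_lt_sin {x : ℝ} (hx : 0 < x) (hx' : x < π / 6) :
    3 / π * x < sin x := by
  have hs : 0 < 6 / π * x := by positivity
  have hs' : 6 / π * x < 1 := by
    rw [div_mul_eq_mul_div, div_lt_one pi_pos]
    linarith
  have := strictConcaveOn_sin_Icc.2 (x := 0) (y := π / 6) ⟨le_rfl, pi_pos.le⟩
    ⟨by positivity, by linarith [pi_pos]⟩ (by positivity : (0 : ℝ) < π / 6).ne
    (sub_pos.2 hs') hs (by ring)
  have hx6 : 6 / π * x * (π / 6) = x := by field_simp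
  simp only [smul_eq_mul, sin_zero, mul_zero, zero_add, sin_pi_div_six, hx6] at this
  linarith [show 3 / π * x = 6 / π * x * (1 / 2) by ring]

lemma lt_pi_div_three_mul_of_sin_le {θ κ : ℝ} (hθ0 : 0 ≤ θ) (hθ : θ < π / 2)
    (hκ0 : 0 < κ) (hκ : κ < 1 / 2) (hsin : sin θ ≤ κ) : θ < π / 3 * κ := by
  have hθ6 : θ < π / 6 := by
    by_contra! h
    have := sin_le_sin_of_le_of_le_pi_div_two (by linarith [pi_pos]) hθ.le h
    rw [sin_pi_div_six] at this
    linarith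
  rcases hθ0.eq_or_lt with rfl | hθpos
  · positivity
  · have := three_div_pi_mul_lt_sin hθpos hθ6
    rw [div_mul_eq_mul_div, div_lt_iff₀ pi_pos] at this
    nlinarith [pi_pos]

section InnerProduct

variable {V : Type*} [NormedAddCommGroup V] [InnerProductSpace ℝ V]

lemma norm_add_inner_inv_norm_smul_le {v : V} (hv : v ≠ 0) (h : V) :
    ‖v‖ + ⟪‖v‖⁻¹ • v, h⟫ ≤ ‖v + h‖ :=
  calc ‖v‖ + ⟪‖v‖⁻¹ • v, h⟫ = ⟪‖v‖⁻¹ • v, v + h⟫ := by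
        rw [inner_add_right, real_inner_smul_left, real_inner_smul_left,
          real_inner_self_eq_norm_sq]
        field_simp [norm_ne_zero_iff.mpr hv]
    _ ≤ ‖‖v‖⁻¹ • v‖ * ‖v + h‖ := real_inner_le_norm _ _
    _ = ‖v + h‖ := by
        rw [norm_smul, norm_inv, norm_norm, inv_mul_cancel₀ (norm_ne_zero_iff.mpr hv), one_mul]

lemma sin_angle_mul_norm_le_norm_sub (e w : V) : sin (angle e w) * ‖e‖ ≤ ‖w - e‖ := by
  rcases eq_or_ne w 0 with rfl | hw
  · simp
  have hV : 0 < ‖w‖ := norm_pos_iff.mpr hw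
  refine le_of_mul_le_mul_right ?_ hV
  rw [mul_assoc, sin_angle_mul_norm_mul_norm, real_inner_self_eq_norm_sq,
    real_inner_self_eq_norm_sq]
  refine Real.sqrt_le_iff.mpr ⟨by positivity, ?_⟩
  rw [mul_pow, norm_sub_sq_real, real_inner_comm]
  nlinarith [sq_nonneg (⟪w, e⟫ - ‖w‖ ^ 2)]

lemma angle_lt_pi_div_two_of_norm_sub_lt {e w : V} (h : ‖w - e‖ < ‖e‖) :
    angle e w < π / 2 := by
  have hP : 0 < ⟪e, w⟫ := by
    have := norm_sub_sq_real w e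
    rw [real_inner_comm] at this
    nlinarith [norm_nonneg (w - e), sq_nonneg ‖w‖]
  exact Real.arccos_lt_pi_div_two.mpr (div_pos hP (hP.trans_le (real_inner_le_norm e w)))

lemma angle_lt_pi_div_three_mul {e w : V} {κ : ℝ} (he : e ≠ 0) (hκ0 : 0 < κ) (hκ : κ < 1 / 2)
    (h : ‖w - e‖ ≤ κ * ‖e‖) : angle e w < π / 3 * κ := by
  have hE : 0 < ‖e‖ := norm_pos_iff.mpr he
  refine lt_pi_div_three_mul_of_sin_le (angle_nonneg e w)
    (angle_lt_pi_div_two_of_norm_sub_lt (h.trans_lt (by nlinarith))) hκ0 hκ ?_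
  exact le_of_mul_le_mul_right ((sin_angle_mul_norm_le_norm_sub e w).trans h) hE

end InnerProduct

lemma dist_add_smul_inv_norm_smul {V : Type*} [NormedAddCommGroup V] [NormedSpace ℝ V]
    {v : V} (hv : v ≠ 0) (z : V) {η : ℝ} (hη : 0 ≤ η) : dist (z + η • ‖v‖⁻¹ • v) z = η := by
  rw [dist_eq_norm, add_sub_cancel_left, norm_smul, norm_smul, norm_inv, norm_norm,
    inv_mul_cancel₀ (norm_ne_zero_iff.mpr hv), mul_one, Real.norm_of_nonneg hη]

section Reach

variable {d : ℕ} {A : Set (Euc d)} {r : ℝ}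

lemma unp_of_infDist_lt (hr : 0 < r) (hrA : ENNReal.ofReal r < reach A) (hne : A.Nonempty)
    {x : Euc d} (hx : infDist x A < r) : x ∈ unp A := by
  obtain ⟨a, haA, hxa⟩ := (infDist_lt_iff hne).mp hx
  have h := hrA.trans_le (iInf₂_le a haA)
  rw [reachAt, lt_sSup_iff] at h
  obtain ⟨ρ, hρ, hrρ⟩ := h
  exact hρ x (lt_of_lt_of_le (by rwa [edist_dist, ENNReal.ofReal_lt_ofReal_iff hr]) hrρ.le)

lemma isClosed_of_forall_infDist_lt_mem_unp (hr : 0 < r)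
    (hU : ∀ x, infDist x A < r → x ∈ unp A) : IsClosed A := by
  rcases A.eq_empty_or_nonempty with rfl | hne
  · exact isClosed_empty
  refine closure_subset_iff_isClosed.mp fun x hx => ?_
  have h0 : infDist x A = 0 := (mem_closure_iff_infDist_zero hne).mp hx
  obtain ⟨p, ⟨hpA, hxp⟩, -⟩ := hU x (h0 ▸ hr)
  rwa [dist_eq_zero.mp (hxp.trans h0)]

lemma exists_dist_foot_lt (hA : IsClosed A) (hU : ∀ x, infDist x A < r → x ∈ unp A)
    {z q : Euc d} (hz : infDist z A < r) (hq : q ∈ A) (hzq : dist z q = infDist z A)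
    {ε : ℝ} (hε : 0 < ε) :
    ∃ δ > 0, ∀ z' q', dist z' z < δ → q' ∈ A → dist z' q' = infDist z' A → dist q' q < ε := by
  by_contra! hc
  choose z' q' hz' hq' hz'q' hfar using fun n : ℕ => hc (1 / (n + 1)) Nat.one_div_pos_of_nat
  have hzlim : Tendsto z' atTop (𝓝 z) := tendsto_iff_dist_tendsto_zero.mpr <|
    squeeze_zero (fun _ => dist_nonneg) (fun n => (hz' n).le)
      tendsto_one_div_add_atTop_nhds_zero_nat
  have hbdd : ∀ n, q' n ∈ closedBall z (infDist z A + 2) := fun n => by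
    have h1 : dist (z' n) z ≤ 1 := (hz' n).le.trans <| by
      rw [div_le_one (by positivity)]; linarith [(n.cast_nonneg : (0 : ℝ) ≤ n)]
    have h2 : infDist (z' n) A ≤ infDist z A + dist (z' n) z := infDist_le_infDist_add_dist
    rw [mem_closedBall]
    linarith [dist_triangle_left (q' n) z (z' n), hz'q' n]
  obtain ⟨q₀, -, φ, hφ, hqlim⟩ := tendsto_subseq_of_bounded isBounded_closedBall hbdd
  have hz'φ := hzlim.comp hφ.tendsto_atTop
  have hq₀A : q₀ ∈ A := hA.mem_of_tendsto hqlim (Eventually.of_forall fun n => hq' (φ n))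
  have hzq₀ : dist z q₀ = infDist z A := by
    refine tendsto_nhds_unique (hz'φ.dist hqlim) ?_
    simpa only [Function.comp_def, hz'q'] using ((continuous_infDist_pt A).tendsto z).comp hz'φ
  obtain ⟨p, -, hp⟩ := hU z hz
  obtain rfl : q₀ = q := (hp q₀ ⟨hq₀A, hzq₀⟩).trans (hp q ⟨hq, hzq⟩).symm
  obtain ⟨n, hn⟩ := ((tendsto_iff_dist_tendsto_zero.mp hqlim).eventually (gt_mem_nhds hε)).exists
  exact (hfar (φ n)).not_gt hn

lemma exists_infDist_add_mul_le (hA : IsClosed A) (hU : ∀ x, infDist x A < r → x ∈ unp A)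
    {z q : Euc d} (hz0 : 0 < infDist z A) (hzr : infDist z A < r) (hq : q ∈ A)
    (hzq : dist z q = infDist z A) {s : ℝ} (hs : s < 1) :
    ∃ η₀ > 0, ∀ η ∈ Ioc 0 η₀,
      infDist z A + s * η ≤ infDist (z + η • ‖z - q‖⁻¹ • (z - q)) A := by
  set u := ‖z - q‖⁻¹ • (z - q) with hu
  have hzq0 : z - q ≠ 0 := by
    rw [sub_ne_zero]; rintro rfl; rw [dist_self] at hzq; linarith
  have hzq0' : ‖z - q‖ ≠ 0 := norm_ne_zero_iff.mpr hzq0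
  have huu : ⟪u, u⟫ = 1 := by
    rw [real_inner_self_eq_norm_sq, hu, norm_smul, norm_inv, norm_norm, inv_mul_cancel₀ hzq0',
      one_pow]
  have hcont : ContinuousAt (fun y => ⟪‖z - y‖⁻¹ • (z - y), u⟫) q :=
    (((continuousAt_const.sub continuousAt_id).norm.inv₀ hzq0').smul
      (continuousAt_const.sub continuousAt_id)).inner continuousAt_const
  obtain ⟨ε, hε, hball⟩ := Metric.eventually_nhds_iff.mp
    (hcont.eventually (eventually_gt_nhds (huu ▸ hs : s < ⟪u, u⟫)))
  obtain ⟨δ, hδ, hfoot⟩ := exists_dist_foot_lt hA hU hzr hq hzq hε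
  refine ⟨δ / 2, by positivity, fun η ⟨hη0, hηδ⟩ => ?_⟩
  obtain ⟨q', hq'A, hq'⟩ := hA.exists_infDist_eq_dist ⟨q, hq⟩ (z + η • u)
  have hkey : s < ⟪‖z - q'‖⁻¹ • (z - q'), u⟫ := hball <| hfoot _ q'
    (by rw [dist_add_smul_inv_norm_smul hzq0 z hη0.le]; linarith) hq'A hq'.symm
  have hzq' : z - q' ≠ 0 := by
    rw [sub_ne_zero]; rintro rfl
    have := infDist_le_dist_of_mem hq'A (x := z)
    rw [dist_self] at this; linarith
  have hzq'δ : infDist z A ≤ ‖z - q'‖ := dist_eq_norm z q' ▸ infDist_le_dist_of_mem hq'A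
  calc infDist z A + s * η ≤ ‖z - q'‖ + η * ⟪‖z - q'‖⁻¹ • (z - q'), u⟫ := by nlinarith
    _ = ‖z - q'‖ + ⟪‖z - q'‖⁻¹ • (z - q'), η • u⟫ := by rw [← real_inner_smul_right]
    _ ≤ ‖z - q' + η • u‖ := norm_add_inner_inv_norm_smul_le hzq' _
    _ = infDist (z + η • u) A := by rw [hq', dist_eq_norm, sub_add_eq_add_sub]

/-- A maximiser of `infDist · A - s * dist · x` on the closed ball lies on the sphere: an
interior one could be pushed outwards along its normal. -/
lemma exists_dist_eq_add_mul_le_infDist (hA : IsClosed A)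
    (hU : ∀ x, infDist x A < r → x ∈ unp A) {x : Euc d} {ρ s : ℝ} (hx0 : 0 < infDist x A)
    (hρ : 0 < ρ) (hxρ : infDist x A + ρ < r) (hs0 : 0 ≤ s) (hs1 : s < 1) :
    ∃ z, dist z x = ρ ∧ infDist x A + s * ρ ≤ infDist z A := by
  obtain ⟨z, hzB, hmax⟩ := (isCompact_closedBall x ρ).exists_isMaxOn
    ⟨x, mem_closedBall_self hρ.le⟩
    ((continuous_infDist_pt A).sub (continuous_const.mul (continuous_id.dist continuous_const))
      ).continuousOn (f := fun w => infDist w A - s * dist w x)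
  have hxz : infDist x A ≤ infDist z A - s * dist z x := by
    simpa using hmax (mem_closedBall_self hρ.le)
  have hzx : dist z x ≤ ρ := hzB
  suffices hzρ : dist z x = ρ from ⟨z, hzρ, by rw [hzρ] at hxz; linarith⟩
  by_contra hne
  have hz0 : 0 < infDist z A := hx0.trans_le (by nlinarith [dist_nonneg (x := z) (y := x)])
  have hzr : infDist z A < r :=
    (infDist_le_infDist_add_dist (y := x)).trans_lt (by linarith)
  obtain ⟨q, ⟨hqA, hzq⟩, -⟩ := hU z hzr
  obtain ⟨η₀, hη₀, hgrow⟩ := exists_infDist_add_mul_le hA hU hz0 hzr hqA hzq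
    (show (1 + s) / 2 < 1 by linarith)
  set η := min η₀ (ρ - dist z x)
  have hη : 0 < η := lt_min hη₀ (by linarith [lt_of_le_of_ne hzx hne])
  set w := z + η • ‖z - q‖⁻¹ • (z - q)
  have hzq0 : z - q ≠ 0 := by
    rw [sub_ne_zero]; rintro rfl; rw [dist_self] at hzq; linarith
  have hwx : dist w x ≤ η + dist z x :=
    (dist_triangle w z x).trans_eq (by rw [dist_add_smul_inv_norm_smul hzq0 z hη.le])
  have hwB : w ∈ closedBall x ρ := by
    rw [mem_closedBall]; linarith [min_le_right η₀ (ρ - dist z x)]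
  have hup := hgrow η ⟨hη, min_le_left _ _⟩
  have hdown : infDist w A - s * dist w x ≤ infDist z A - s * dist z x := hmax hwB
  nlinarith [mul_le_mul_of_nonneg_left hwx hs0]

lemma exists_dist_eq_infDist_eq_add (hA : IsClosed A)
    (hU : ∀ x, infDist x A < r → x ∈ unp A) {x : Euc d} {ρ : ℝ} (hx0 : 0 < infDist x A)
    (hρ : 0 < ρ) (hxρ : infDist x A + ρ < r) :
    ∃ z, dist z x = ρ ∧ infDist z A = infDist x A + ρ := by
  have hstep := fun s (hs : s ∈ Ioo 0 1) =>
    exists_dist_eq_add_mul_le_infDist hA hU hx0 hρ hxρ hs.1.le hs.2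
  obtain ⟨z₀, hz₀, -⟩ := hstep (1 / 2) ⟨by norm_num, by norm_num⟩
  obtain ⟨z, hz, hmax⟩ := (isCompact_sphere x ρ).exists_isMaxOn ⟨z₀, hz₀⟩
    (continuous_infDist_pt A).continuousOn
  have hzx : dist z x = ρ := hz
  refine ⟨z, hzx, le_antisymm (hzx ▸ infDist_le_infDist_add_dist) ?_⟩
  have hlim : Tendsto (fun s => infDist x A + s * ρ) (𝓝[<] 1) (𝓝 (infDist x A + ρ)) := by
    simpa using ((tendsto_id.mono_left (nhdsWithin_le_nhds (a := (1 : ℝ)) (s := Iio 1))).mul_const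
      ρ).const_add (infDist x A)
  refine le_of_tendsto hlim ?_
  filter_upwards [Ioo_mem_nhdsLT one_pos] with s hs
  obtain ⟨z', hz', hle⟩ := hstep s hs
  exact hle.trans (hmax hz')

end Reach

section Normal

variable {d : ℕ} {A : Set (Euc d)} {r : ℝ}

lemma inner_sub_foot_mul_le_of_lt (hA : IsClosed A) (hU : ∀ x, infDist x A < r → x ∈ unp A)
    {x p c : Euc d} (hx0 : 0 < infDist x A) (hp : p ∈ A) (hxp : dist x p = infDist x A)
    (hc : c ∈ A) {τ : ℝ} (hxτ : infDist x A < τ) (hτr : τ < r) :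
    ⟪x - p, c - p⟫ * (2 * τ) ≤ ‖x - p‖ * ‖c - p‖ ^ 2 := by
  set δ := infDist x A
  have hτ0 : 0 < τ := hx0.trans hxτ
  obtain ⟨y, hyx, hy⟩ := exists_dist_eq_infDist_eq_add hA hU hx0 (sub_pos.mpr hxτ)
    (by linarith)
  rw [add_sub_cancel] at hy
  have hpy : dist p y = τ := by
    refine le_antisymm ?_ (dist_comm p y ▸ hy ▸ infDist_le_dist_of_mem hp)
    linarith [dist_triangle p x y, dist_comm x p, dist_comm x y]
  have hxp' : ‖x - p‖ = δ := by rw [← dist_eq_norm, hxp]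
  -- equality in the triangle inequality puts `x` on the segment from `p` to `y`
  have hx : x = AffineMap.lineMap p y (δ / τ) := by
    refine eq_lineMap_of_dist_eq_mul_of_dist_eq_mul ?_ ?_
    · rw [hpy, dist_comm, hxp]; field_simp
    · rw [hpy, dist_comm, hyx]; field_simp
  have hyp : y - p = (τ / δ) • (x - p) := by
    rw [hx, AffineMap.lineMap_apply_module', add_sub_cancel_right, smul_smul, div_mul_div_comm,
      mul_comm τ δ, div_self (by positivity), one_smul]
  have hyc : τ ≤ ‖y - c‖ := hy ▸ dist_eq_norm y c ▸ infDist_le_dist_of_mem hc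
  have hyc' : ‖y - c‖ ^ 2 = τ ^ 2 - 2 * (τ / δ) * ⟪x - p, c - p⟫ + ‖c - p‖ ^ 2 := by
    rw [show y - c = (y - p) - (c - p) by abel, norm_sub_sq_real, hyp, norm_smul,
      real_inner_smul_left, Real.norm_of_nonneg (by positivity), hxp']
    field_simp
  have h2 : 2 * (τ / δ) * ⟪x - p, c - p⟫ ≤ ‖c - p‖ ^ 2 := by nlinarith
  rw [hxp']
  calc ⟪x - p, c - p⟫ * (2 * τ) = 2 * (τ / δ) * ⟪x - p, c - p⟫ * δ := by field_simp
    _ ≤ δ * ‖c - p‖ ^ 2 := by nlinarith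

/-- Federer's normal inequality. -/
theorem inner_sub_foot_mul_le (hA : IsClosed A) (hU : ∀ x, infDist x A < r → x ∈ unp A)
    {x p c : Euc d} (hxr : infDist x A < r) (hp : p ∈ A) (hxp : dist x p = infDist x A)
    (hc : c ∈ A) : ⟪x - p, c - p⟫ * (2 * r) ≤ ‖x - p‖ * ‖c - p‖ ^ 2 := by
  rcases (infDist_nonneg (x := x) (s := A)).eq_or_lt with h0 | h0
  · obtain rfl : x = p := dist_eq_zero.mp (hxp.trans h0.symm)
    simp
  have hlim : Tendsto (fun τ => ⟪x - p, c - p⟫ * (2 * τ)) (𝓝[<] r)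
      (𝓝 (⟪x - p, c - p⟫ * (2 * r))) :=
    ((tendsto_id.mono_left (nhdsWithin_le_nhds (a := r) (s := Iio r))).const_mul 2).const_mul _
  refine le_of_tendsto hlim ?_
  filter_upwards [Ioo_mem_nhdsLT hxr] with τ hτ
  exact inner_sub_foot_mul_le_of_lt hA hU h0 hp hxp hc hτ.1 hτ.2

lemma norm_sub_foot_mul_le (hA : IsClosed A) (hU : ∀ x, infDist x A < r → x ∈ unp A)
    {c₁ c₂ p : Euc d} {t : ℝ} (ht0 : 0 ≤ t) (ht1 : t ≤ 1) (hc₁ : c₁ ∈ A) (hc₂ : c₂ ∈ A)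
    (hqr : infDist (c₁ + t • (c₂ - c₁)) A < r) (hp : p ∈ A)
    (hqp : dist (c₁ + t • (c₂ - c₁)) p = infDist (c₁ + t • (c₂ - c₁)) A) :
    ‖c₁ + t • (c₂ - c₁) - p‖ * (2 * r) ≤ (1 - t) * ‖c₁ - p‖ ^ 2 + t * ‖c₂ - p‖ ^ 2 := by
  set q := c₁ + t • (c₂ - c₁)
  have h₁ := mul_le_mul_of_nonneg_left (inner_sub_foot_mul_le hA hU hqr hp hqp hc₁)
    (sub_nonneg.mpr ht1)
  have h₂ := mul_le_mul_of_nonneg_left (inner_sub_foot_mul_le hA hU hqr hp hqp hc₂) ht0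
  have hq : ‖q - p‖ ^ 2 = (1 - t) * ⟪q - p, c₁ - p⟫ + t * ⟪q - p, c₂ - p⟫ := by
    rw [← real_inner_self_eq_norm_sq, ← real_inner_smul_right, ← real_inner_smul_right,
      ← inner_add_right]
    congr 1
    module
  rcases (norm_nonneg (q - p)).eq_or_lt with h0 | h0
  · rw [← h0, zero_mul]
    have := sub_nonneg.mpr ht1
    positivity
  · refine le_of_mul_le_mul_left ?_ h0
    have h2r : ‖q - p‖ ^ 2 * (2 * r)
        = ((1 - t) * ⟪q - p, c₁ - p⟫ + t * ⟪q - p, c₂ - p⟫) * (2 * r) := by rw [hq]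
    linarith

end Normal

section Tangent

variable {d : ℕ} {A : Set (Euc d)} {r : ℝ}

lemma exists_mem_tanCone_norm_sub_le_of_forall {a e : Euc d} {ε C t₀ : ℝ} (ht₀ : 0 < t₀)
    (hC : 0 ≤ C) (h : ∀ t ∈ Ioc 0 t₀, ∃ p ∈ A, p ≠ a ∧ ‖t⁻¹ • (p - a) - e‖ ≤ ε + C * t) :
    ∃ w ∈ tanCone A a, ‖w - e‖ ≤ ε := by
  set t : ℕ → ℝ := fun n => t₀ * (1 / (n + 1))
  have ht : ∀ n, t n ∈ Ioc 0 t₀ := fun n =>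
    ⟨by positivity, mul_le_of_le_one_right ht₀.le (by simpa using Nat.one_div_le_one_div (α := ℝ) (Nat.zero_le n))⟩
  have htlim : Tendsto t atTop (𝓝 0) := by
    simpa only [mul_zero] using tendsto_one_div_add_atTop_nhds_zero_nat.const_mul t₀
  choose p hpA hpa hp using fun n => h (t n) (ht n)
  set v := fun n => (t n)⁻¹ • (p n - a)
  have hvbdd : ∀ n, v n ∈ closedBall e (ε + C * t₀) := fun n => by
    rw [mem_closedBall, dist_eq_norm]
    exact (hp n).trans (by gcongr; exact (ht n).2)
  obtain ⟨w, -, φ, hφ, hw⟩ := tendsto_subseq_of_bounded isBounded_closedBall hvbdd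
  have htφ := htlim.comp hφ.tendsto_atTop
  have hpφ : Tendsto (fun k => p (φ k)) atTop (𝓝 a) := by
    have hpv : ∀ n, p n = a + t n • v n := fun n => by
      simp only [v, smul_smul, mul_inv_cancel₀ (ht n).1.ne', one_smul, add_sub_cancel]
    simpa [hpv] using tendsto_const_nhds.add (htφ.smul (hw : Tendsto (v ∘ φ) atTop (𝓝 w)))
  refine ⟨w, Or.inr ⟨fun k => p (φ k), fun k => (t (φ k))⁻¹, fun k => ⟨hpA _, hpa _⟩, hpφ,
    fun k => inv_pos.mpr (ht _).1, hw⟩, ?_⟩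
  have hbound : Tendsto (fun k => ε + C * t (φ k)) atTop (𝓝 ε) := by
    simpa using tendsto_const_nhds.add (htφ.const_mul C)
  exact le_of_tendsto_of_tendsto (hw.sub_const e).norm hbound
    (Eventually.of_forall fun k => hp (φ k))

/-- The witness is the nearest point of `A` to `a + t • (b - a)`. -/
lemma exists_ne_norm_inv_smul_sub_le (hA : IsClosed A) (hU : ∀ x, infDist x A < r → x ∈ unp A)
    {a b : Euc d} (ha : a ∈ A) (hb : b ∈ A) (hab : b ≠ a) (hlt : ‖b - a‖ < r) {t : ℝ}
    (ht0 : 0 < t) (ht : t ≤ 1 / 4) :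
    ∃ p ∈ A, p ≠ a ∧
      ‖t⁻¹ • (p - a) - (b - a)‖ ≤ ‖b - a‖ ^ 2 / (2 * r) + 2 * ‖b - a‖ ^ 2 / r * t := by
  set E := ‖b - a‖
  have hE : 0 < E := norm_pos_iff.mpr (sub_ne_zero.mpr hab)
  set q := a + t • (b - a)
  have hqa : ‖q - a‖ = t * E := by
    rw [add_sub_cancel_left, norm_smul, Real.norm_of_nonneg ht0.le]
  have hbq : ‖b - q‖ = (1 - t) * E := by
    rw [show b - q = (1 - t) • (b - a) by module, norm_smul,
      Real.norm_of_nonneg (by linarith)]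
  have hqr : infDist q A < r :=
    (dist_eq_norm q a ▸ infDist_le_dist_of_mem ha).trans_lt (by nlinarith)
  obtain ⟨p, ⟨hpA, hqp⟩, -⟩ := hU q hqr
  have hδ : ‖q - p‖ ≤ t * E := hqa ▸ dist_eq_norm q p ▸ hqp ▸ infDist_le_dist_of_mem ha
  have hap : ‖a - p‖ ≤ 2 * t * E := by
    have := norm_sub_le_norm_sub_add_norm_sub a q p
    rw [norm_sub_rev a q, hqa] at this; linarith
  have hbp : ‖b - p‖ ≤ E := by
    have := norm_sub_le_norm_sub_add_norm_sub b q p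
    rw [hbq] at this; linarith
  have hsec := norm_sub_foot_mul_le hA hU ht0.le (by linarith) ha hb hqr hpA hqp
  have hδ' : ‖q - p‖ * (2 * r) ≤ t * E ^ 2 * (4 * t + 1) := by
    have h1 : ‖a - p‖ ^ 2 ≤ (2 * t * E) ^ 2 := by gcongr
    have h2 : ‖b - p‖ ^ 2 ≤ E ^ 2 := by gcongr
    nlinarith [mul_le_mul_of_nonneg_left h1 (by linarith : (0 : ℝ) ≤ 1 - t),
      mul_le_mul_of_nonneg_left h2 ht0.le]
  refine ⟨p, hpA, ?_, ?_⟩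
  · rintro rfl
    have h := le_of_mul_le_mul_left ((hqa ▸ hδ').trans_eq
      (by ring : t * E ^ 2 * (4 * t + 1) = t * E * (E * (4 * t + 1)))) (mul_pos ht0 hE)
    nlinarith
  · rw [show t⁻¹ • (p - a) - (b - a) = t⁻¹ • (p - q) by
      simp only [q, smul_sub, smul_add, smul_smul, inv_mul_cancel₀ ht0.ne', one_smul]; abel,
      norm_smul, norm_inv, Real.norm_of_nonneg ht0.le, norm_sub_rev, inv_mul_le_iff₀ ht0]
    have hr : 0 < r := hE.trans hlt
    calc ‖q - p‖ ≤ t * E ^ 2 * (4 * t + 1) / (2 * r) := by rwa [le_div_iff₀ (by positivity)]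
      _ = t * (E ^ 2 / (2 * r) + 2 * E ^ 2 / r * t) := by field_simp; ring

theorem exists_mem_tanCone_norm_sub_le (hr : 0 < r) (hA : IsClosed A)
    (hU : ∀ x, infDist x A < r → x ∈ unp A) {a b : Euc d} (ha : a ∈ A) (hb : b ∈ A)
    (hab : b ≠ a) (hlt : ‖b - a‖ < r) :
    ∃ w ∈ tanCone A a, ‖w - (b - a)‖ ≤ ‖b - a‖ ^ 2 / (2 * r) :=
  exists_mem_tanCone_norm_sub_le_of_forall (t₀ := 1 / 4) (by norm_num) (by positivity)
    fun _ ht => exists_ne_norm_inv_smul_sub_le hA hU ha hb hab hlt ht.1 ht.2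

end Tangent

theorem stmt4 {d : ℕ} (A : Set (Euc d)) (r : ℝ) (hr : 0 < r)
    (hrA : ENNReal.ofReal r < reach A) (a b : Euc d) (ha : a ∈ A) (hb : b ∈ A)
    (hab : b ≠ a) (hlt : ‖b - a‖ < r) :
    ∃ v ∈ tanCone A a, v ≠ 0 ∧
      InnerProductGeometry.angle (b - a) v < Real.pi / 6 * (‖b - a‖ / r) := by
  have hU : ∀ x, infDist x A < r → x ∈ unp A := fun _ => unp_of_infDist_lt hr hrA ⟨a, ha⟩
  obtain ⟨w, hw, hwe⟩ := exists_mem_tanCone_norm_sub_le hr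
    (isClosed_of_forall_infDist_lt_mem_unp hr hU) hU ha hb hab hlt
  have hE : 0 < ‖b - a‖ := norm_pos_iff.mpr (sub_ne_zero.mpr hab)
  have hκ : ‖b - a‖ / (2 * r) < 1 / 2 := by
    rw [div_lt_iff₀ (by positivity)]; linarith
  have hwe' : ‖w - (b - a)‖ ≤ ‖b - a‖ / (2 * r) * ‖b - a‖ := by
    rwa [div_mul_eq_mul_div, ← sq]
  refine ⟨w, hw, ?_, ?_⟩
  · rintro rfl
    rw [zero_sub, norm_neg] at hwe'
    exact hwe'.not_gt (mul_lt_of_lt_one_left hE (by linarith))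
  · calc angle (b - a) w < Real.pi / 3 * (‖b - a‖ / (2 * r)) :=
          angle_lt_pi_div_three_mul (sub_ne_zero.mpr hab) (by positivity) hκ hwe'
      _ = Real.pi / 6 * (‖b - a‖ / r) := by ring
end
end

section
/- Let 2 ≤ k ≤ d, θ > 0, and let v₁,…,v_k, w be unit vectors in ℝ^d such that the simplex σ = conv{0, v₁, …, v_k} has fullness Θ(σ) ≥ θ. Then there exists an index 1 ≤ i ≤ k such that the simplex obtained by replacing v_i with w satisfies Θ(conv{0, v₁,…,v_{i−1}, w, v_{i+1},…,v_k}) ≥ θ/(k·2^{k+1}). -/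
open Metric Set MeasureTheory
open scoped RealInnerProductSpace ENNReal NNReal

noncomputable section

/-!
Write `G(u)` for the Gram determinant of `u₁, …, u_k`. The `k`-dimensional volume of
`conv {0, u₁, …, u_k}` is `√G(u)` times that of `conv {0, e₁, …, e_k}`, and a simplex spanned
by `0` and unit vectors has diameter in `[1, 2]`; so it suffices to find `i` with
`G(v) ≤ k² G(v[i ↦ w])`. Split `w = ∑ c_j v_j + q` with `q ⊥ span v` and take `i` maximising
`|c_i|`, so that `1 = ‖w‖² ≤ k² c_i² + ‖q‖²`. Expanding along row `i`,
`G(v[i ↦ w]) = c_i² G(v) + ‖q‖² G(v without v_i)`, while `G(v) ≤ ‖v_i‖² G(v without v_i)`.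
-/

open Matrix

section Gram

variable {E : Type*} [NormedAddCommGroup E] [InnerProductSpace ℝ E]

theorem gram_sum_smul {ι : Type*} [Fintype ι] (u : ι → E) (N : Matrix ι ι ℝ) :
    gram ℝ (fun j => ∑ s, N s j • u s) = Nᵀ * gram ℝ u * N := by
  ext i j
  simp only [gram_apply, mul_apply, transpose_apply, sum_inner, inner_sum,
    real_inner_smul_left, real_inner_smul_right, Finset.sum_mul]
  exact Finset.sum_congr rfl fun s _ => Finset.sum_congr rfl fun t _ => by ring

theorem det_gram_update_sum_smul {ι : Type*} [Fintype ι] [DecidableEq ι] (u : ι → E) (i : ι)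
    (c : ι → ℝ) :
    (gram ℝ (Function.update u i (∑ s, c s • u s))).det = c i ^ 2 * (gram ℝ u).det := by
  have hcomb : Function.update u i (∑ s, c s • u s)
      = fun j => ∑ s, (1 : Matrix ι ι ℝ).updateCol i c s j • u s := by
    funext j
    rcases eq_or_ne j i with rfl | hj
    · simp
    · simp [hj, one_apply, ite_smul]
  have hdet : ((1 : Matrix ι ι ℝ).updateCol i c).det = c i := by
    rw [← cramer_apply, cramer_one]
    rfl
  rw [hcomb, gram_sum_smul, det_mul, det_mul, det_transpose, hdet]
  ring

theorem det_updateRow_add_single {R : Type*} [CommRing R] {n : ℕ}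
    (A : Matrix (Fin (n + 1)) (Fin (n + 1)) R) (i : Fin (n + 1)) (c : R) :
    (A.updateRow i (A i + Pi.single i c)).det
      = A.det + c * (A.submatrix i.succAbove i.succAbove).det := by
  have hsingle : (Pi.single i c : Fin (n + 1) → R) = c • Pi.single i 1 := by
    rw [← Pi.single_smul', smul_eq_mul, mul_one]
  rw [det_updateRow_add, updateRow_eq_self, hsingle, det_updateRow_smul, ← adjugate_apply,
    adjugate_fin_succ_eq_det_submatrix, ← two_mul, pow_mul, neg_one_sq, one_pow, one_mul]

variable {n : ℕ}

theorem det_gram_update_add_of_inner_eq_zero (u : Fin (n + 1) → E) (i : Fin (n + 1))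
    {p q : E} (hqp : ⟪q, p⟫ = 0) (hqu : ∀ j ≠ i, ⟪u j, q⟫ = 0) :
    (gram ℝ (Function.update u i (p + q))).det
      = (gram ℝ (Function.update u i p)).det + ‖q‖ ^ 2 * (gram ℝ (u ∘ i.succAbove)).det := by
  set A := gram ℝ (Function.update u i p)
  have hpq : ‖p + q‖ ^ 2 = ‖p‖ ^ 2 + ‖q‖ ^ 2 := by
    rw [norm_add_sq_real, real_inner_comm, hqp, mul_zero, add_zero]
  have hqu' : ∀ j ≠ i, ⟪q, u j⟫ = 0 := fun j hj => by rw [real_inner_comm, hqu j hj]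
  have hrow :
      gram ℝ (Function.update u i (p + q)) = A.updateRow i (A i + Pi.single i (‖q‖ ^ 2)) := by
    ext a b
    by_cases ha : a = i <;> by_cases hb : b = i <;>
      simp [A, ha, hb, inner_add_left, inner_add_right, hqu, hqu', hpq]
  have hminor : A.submatrix i.succAbove i.succAbove = gram ℝ (u ∘ i.succAbove) := by
    ext a b
    simp [A, Fin.succAbove_ne]
  rw [hrow, det_updateRow_add_single, hminor]

theorem det_gram_le_norm_sq_mul (u : Fin (n + 1) → E) (i : Fin (n + 1)) :
    (gram ℝ u).det ≤ ‖u i‖ ^ 2 * (gram ℝ (u ∘ i.succAbove)).det := by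
  set U := Submodule.span ℝ (Set.range (u ∘ i.succAbove))
  have : FiniteDimensional ℝ U := .span_of_finite ℝ (Set.finite_range _)
  obtain ⟨a, haU, r, hrU, hsplit⟩ := U.exists_add_mem_mem_orthogonal (u i)
  have hr : ∀ j ≠ i, ⟪u j, r⟫ = 0 := fun j hj => by
    obtain ⟨j', rfl⟩ := Fin.exists_succAbove_eq hj
    exact U.inner_right_of_mem_orthogonal (Submodule.subset_span ⟨j', rfl⟩) hrU
  have hra : ⟪r, a⟫ = 0 := U.inner_left_of_mem_orthogonal haU hrU
  have ha : (gram ℝ (Function.update u i a)).det = 0 := by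
    obtain ⟨c, rfl⟩ := Submodule.mem_span_range_iff_exists_fun ℝ |>.mp haU
    have hsum : ∑ j, c j • (u ∘ i.succAbove) j
        = ∑ s, (Fin.insertNth i 0 c : Fin (n + 1) → ℝ) s • u s := by
      simp [Fin.sum_univ_succAbove _ i]
    rw [hsum, det_gram_update_sum_smul, Fin.insertNth_apply_same]
    ring
  have hvol := det_gram_update_add_of_inner_eq_zero u i hra hr
  rw [← hsplit, Function.update_eq_self, ha, zero_add] at hvol
  have hr_le : ‖r‖ ^ 2 ≤ ‖u i‖ ^ 2 := by
    rw [hsplit, norm_add_sq_real, real_inner_comm, hra]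
    nlinarith [sq_nonneg ‖a‖]
  rw [hvol]
  exact mul_le_mul_of_nonneg_right hr_le (posSemidef_gram ℝ _).det_nonneg

theorem exists_det_gram_update_ge (v : Fin (n + 1) → E) (hv : ∀ j, ‖v j‖ ≤ 1) (w : E) :
    ∃ i, ‖w‖ ^ 2 * (gram ℝ v).det
      ≤ ((n + 1 : ℕ) : ℝ) ^ 2 * (gram ℝ (Function.update v i w)).det := by
  set V := Submodule.span ℝ (Set.range v)
  have : FiniteDimensional ℝ V := .span_of_finite ℝ (Set.finite_range _)
  obtain ⟨p, hpV, q, hqV, rfl⟩ := V.exists_add_mem_mem_orthogonal w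
  obtain ⟨c, rfl⟩ := Submodule.mem_span_range_iff_exists_fun ℝ |>.mp hpV
  obtain ⟨i, -, hi⟩ := Finset.univ.exists_max_image (fun j => |c j|) Finset.univ_nonempty
  refine ⟨i, ?_⟩
  have hqv : ∀ j, ⟪v j, q⟫ = 0 := fun j =>
    V.inner_right_of_mem_orthogonal (Submodule.subset_span ⟨j, rfl⟩) hqV
  have hqp : ⟪q, ∑ j, c j • v j⟫ = 0 := V.inner_left_of_mem_orthogonal hpV hqV
  have hdet : (gram ℝ (Function.update v i (∑ j, c j • v j + q))).det
      = c i ^ 2 * (gram ℝ v).det + ‖q‖ ^ 2 * (gram ℝ (v ∘ i.succAbove)).det := by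
    rw [det_gram_update_add_of_inner_eq_zero v i hqp fun j _ => hqv j,
      det_gram_update_sum_smul]
  have hG : 0 ≤ (gram ℝ v).det := (posSemidef_gram ℝ v).det_nonneg
  have hM : 0 ≤ (gram ℝ (v ∘ i.succAbove)).det := (posSemidef_gram ℝ _).det_nonneg
  have hGM : (gram ℝ v).det ≤ (gram ℝ (v ∘ i.succAbove)).det :=
    (det_gram_le_norm_sq_mul v i).trans
      (mul_le_of_le_one_left hM (pow_le_one₀ (norm_nonneg _) (hv i)))
  have hp : ‖∑ j, c j • v j‖ ^ 2 ≤ ((n + 1 : ℕ) : ℝ) ^ 2 * c i ^ 2 := by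
    have hsum : ‖∑ j, c j • v j‖ ≤ ∑ _j : Fin (n + 1), |c i| := norm_sum_le_of_le _ fun j _ => by
      rw [norm_smul, Real.norm_eq_abs]
      exact (mul_le_of_le_one_right (abs_nonneg _) (hv j)).trans (hi j (Finset.mem_univ j))
    rw [Finset.sum_const, Finset.card_univ, Fintype.card_fin, nsmul_eq_mul] at hsum
    rw [← sq_abs (c i), ← mul_pow]
    exact pow_le_pow_left₀ (norm_nonneg _) hsum 2
  have hw : ‖∑ j, c j • v j + q‖ ^ 2 = ‖∑ j, c j • v j‖ ^ 2 + ‖q‖ ^ 2 := by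
    rw [norm_add_sq_real, real_inner_comm, hqp, mul_zero, add_zero]
  have hn : (1 : ℝ) ≤ ((n + 1 : ℕ) : ℝ) ^ 2 := one_le_pow₀ (by norm_num)
  rw [hdet, hw]
  nlinarith [mul_le_mul_of_nonneg_right hp hG, mul_le_mul_of_nonneg_left hGM (sq_nonneg ‖q‖),
    mul_nonneg (sub_nonneg.2 hn) (mul_nonneg (sq_nonneg ‖q‖) hM)]

end Gram

local notation "σ₀" u:max => convexHull ℝ (Set.range (Fin.cons 0 u))

def cornerSimplex (k : ℕ) : Set (EuclideanSpace ℝ (Fin k)) :=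
  σ₀ (EuclideanSpace.basisFun (Fin k) ℝ)

section Simplex

variable {E : Type*} [NormedAddCommGroup E] [InnerProductSpace ℝ E] {k : ℕ}

theorem hausdorffMeasure_convexHull_cons_zero [MeasurableSpace E] [BorelSpace E]
    (u : Fin k → E) : μH[k] (σ₀ u) = ENNReal.ofReal √(gram ℝ u).det * μH[k] (cornerSimplex k) := by
  set b := EuclideanSpace.basisFun (Fin k) ℝ
  set L : EuclideanSpace ℝ (Fin k) →ₗ[ℝ] E := b.toBasis.constr ℝ u
  have hLb : L ∘ b = u := funext fun i => by simp [L]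
  have himage : L '' cornerSimplex k = σ₀ u := by
    rw [cornerSimplex, L.image_convexHull, ← Set.range_comp, Fin.comp_cons, map_zero, hLb]
  have hnormDet : L.normDet = √(gram ℝ u).det := by
    have hsq := L.normDet_sq_eq_det_gram b
    simp only [RCLike.ofReal_real_eq_id, id] at hsq
    rw [← hLb, Function.comp_def, ← hsq, Real.sqrt_sq L.normDet_nonneg]
  have hL := L.hausdorffMeasure_image (cornerSimplex k)
  rw [finrank_euclideanSpace_fin] at hL
  rw [← himage, hL, hnormDet]

theorem diam_convexHull_cons_zero_le (u : Fin k → E) {r : ℝ} (hr : 0 ≤ r)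
    (hu : ∀ j, ‖u j‖ ≤ r) : diam (σ₀ u) ≤ 2 * r := by
  have hball : Set.range (Fin.cons 0 u) ⊆ closedBall (0 : E) r := by
    rw [Fin.range_cons, Set.insert_subset_iff, Set.range_subset_iff]
    exact ⟨mem_closedBall_self hr, fun j => mem_closedBall_zero_iff.2 (hu j)⟩
  rw [convexHull_diam]
  exact (diam_mono hball isBounded_closedBall).trans (diam_closedBall hr)

theorem norm_le_diam_convexHull_cons_zero (u : Fin k → E) (j : Fin k) : ‖u j‖ ≤ diam (σ₀ u) := by
  rw [convexHull_diam, ← dist_zero_left]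
  exact dist_le_diam_of_mem (Set.finite_range _).isBounded ⟨0, rfl⟩ ⟨j.succ, rfl⟩

theorem diam_convexHull_cons_zero_mem_Icc (u : Fin k → E) (hu : ∀ j, ‖u j‖ = 1) (j : Fin k) :
    diam (σ₀ u) ∈ Set.Icc 1 2 :=
  ⟨(hu j).symm.le.trans (norm_le_diam_convexHull_cons_zero u j),
    (diam_convexHull_cons_zero_le u zero_le_one fun j => (hu j).le).trans_eq (mul_one 2)⟩

end Simplex

section Fullness

variable {d k : ℕ}

theorem fullness_nonneg (s : Set (Euc d)) : 0 ≤ fullness k s := by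
  unfold fullness
  positivity

theorem fullness_convexHull_cons_zero (u : Fin k → Euc d) :
    fullness k (σ₀ u)
      = √(gram ℝ u).det * (μH[k] (cornerSimplex k)).toReal / diam (σ₀ u) ^ k := by
  rw [fullness, hausdorffMeasure_convexHull_cons_zero, ENNReal.toReal_mul,
    ENNReal.toReal_ofReal (Real.sqrt_nonneg _)]

theorem exists_fullness_update_ge (hk : 0 < k) (v : Fin k → Euc d) (w : Euc d)
    (hv : ∀ j, ‖v j‖ = 1) (hw : ‖w‖ = 1) :
    ∃ i : Fin k,
      fullness k (σ₀ v) / ((k : ℝ) * 2 ^ k) ≤ fullness k (σ₀ (Function.update v i w)) := by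
  obtain ⟨n, rfl⟩ := Nat.exists_eq_add_one_of_ne_zero hk.ne'
  obtain ⟨i, hi⟩ := exists_det_gram_update_ge v (fun j => (hv j).le) w
  rw [hw, one_pow, one_mul] at hi
  refine ⟨i, ?_⟩
  set κ := (μH[((n + 1 : ℕ) : ℝ)] (cornerSimplex (n + 1))).toReal
  set v' := Function.update v i w
  have hsqrt : √(gram ℝ v).det ≤ ((n + 1 : ℕ) : ℝ) * √(gram ℝ v').det := by
    have := Real.sqrt_le_sqrt hi
    rwa [Real.sqrt_mul (sq_nonneg _), Real.sqrt_sq (Nat.cast_nonneg _)] at this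
  have hD := diam_convexHull_cons_zero_mem_Icc v hv i
  have hD' := diam_convexHull_cons_zero_mem_Icc v'
    (Function.forall_update_iff v (p := fun _ x => ‖x‖ = 1) |>.2 ⟨hw, fun j _ => hv j⟩) i
  rw [fullness_convexHull_cons_zero, fullness_convexHull_cons_zero]
  calc √(gram ℝ v).det * κ / diam (σ₀ v) ^ (n + 1) / (((n + 1 : ℕ) : ℝ) * 2 ^ (n + 1))
      ≤ √(gram ℝ v).det * κ / (((n + 1 : ℕ) : ℝ) * 2 ^ (n + 1)) := by
        gcongr
        exact div_le_self (by positivity) (one_le_pow₀ hD.1)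
    _ ≤ ((n + 1 : ℕ) : ℝ) * √(gram ℝ v').det * κ / (((n + 1 : ℕ) : ℝ) * 2 ^ (n + 1)) := by
        gcongr
    _ = √(gram ℝ v').det * κ / 2 ^ (n + 1) := by field_simp
    _ ≤ √(gram ℝ v').det * κ / diam (σ₀ v') ^ (n + 1) := by
        gcongr
        exacts [pow_pos (zero_lt_one.trans_le hD'.1) _, hD'.2]

end Fullness

theorem stmt8_general {d k : ℕ} (hk : 2 ≤ k) (θ : ℝ)
    (v : Fin k → Euc d) (w : Euc d) (hv : ∀ i, ‖v i‖ = 1) (hw : ‖w‖ = 1)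
    (hfull : θ ≤ fullness k (convexHull ℝ (Set.range (Fin.cons (0 : Euc d) v)))) :
    ∃ i : Fin k,
      θ / ((k : ℝ) * 2 ^ (k + 1)) ≤
        fullness k (convexHull ℝ (Set.range (Fin.cons (0 : Euc d) (Function.update v i w)))) := by
  obtain ⟨i, hi⟩ := exists_fullness_update_ge (by omega) v w hv hw
  refine ⟨i, le_trans ?_ hi⟩
  calc θ / ((k : ℝ) * 2 ^ (k + 1)) ≤ fullness k (σ₀ v) / ((k : ℝ) * 2 ^ (k + 1)) := by gcongr
    _ ≤ fullness k (σ₀ v) / ((k : ℝ) * 2 ^ k) := by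
        gcongr
        · exact fullness_nonneg _
        all_goals norm_num

theorem stmt8 {d k : ℕ} (hk : 2 ≤ k) (hkd : k ≤ d) (θ : ℝ) (hθ : 0 < θ)
    (v : Fin k → Euc d) (w : Euc d) (hv : ∀ i, ‖v i‖ = 1) (hw : ‖w‖ = 1)
    (hfull : θ ≤ fullness k (convexHull ℝ (Set.range (Fin.cons (0 : Euc d) v)))) :
    ∃ i : Fin k,
      θ / ((k : ℝ) * 2 ^ (k + 1)) ≤
        fullness k (convexHull ℝ (Set.range (Fin.cons (0 : Euc d) (Function.update v i w)))) :=
  stmt8_general hk θ v w hv hw hfull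
end
end

section
/- Let C, C′ ⊆ span{e₁} ⊆ ℝ^d (d ≥ 3) be nonempty compact subsets of the x₁-axis with C ∩ [p,q] = C′ ∩ [p,q] for some p < q (identifying the axis with ℝ). Let ρ be a multirotation associated with C. Then there exists a multirotation ρ′ associated with C′ such that ρ and ρ′ agree on π^{-1}([p,q]), where π is the orthogonal projection onto the x₁-axis. -/
open Metric Set MeasureTheory
open scoped RealInnerProductSpace ENNReal NNReal

noncomputable section

/-- A 2-rotation: a rotation of `ℝ^d` acting in a 2-plane orthogonal to `e₁` and fixing
its orthogonal complement pointwise. -/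
def IsTwoRotation {d : ℕ} (e1 : Euc d) (R : Euc d ≃ₗᵢ[ℝ] Euc d) : Prop :=
  ∃ T : Submodule ℝ (Euc d), Module.finrank ℝ T = 2 ∧ (∀ v ∈ T, ⟪v, e1⟫ = 0) ∧
    (∀ v ∈ Tᗮ, R v = v) ∧ LinearEquiv.det R.toLinearEquiv = 1

/-- A multirotation associated with a compact set `C` on the `x₁`-axis (identified with `ℝ`
via `t ↦ t • e₁`): the identity above `C`, and a fixed 2-rotation above each connected
component of the complement of `C`. -/
def IsMultirotation {d : ℕ} (e1 : Euc d) (C : Set ℝ) (ρ : Euc d → Euc d) : Prop :=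
  (∀ x : Euc d, ⟪x, e1⟫ ∈ C → ρ x = x) ∧
  ∀ t : ℝ, t ∉ C → ∃ R : Euc d ≃ₗᵢ[ℝ] Euc d, IsTwoRotation e1 R ∧
    ∀ x : Euc d, ⟪x, e1⟫ ∈ connectedComponentIn Cᶜ t → ρ x = R x

/-! Keep `ρ` on the slab over `[p, q]` and rotate each remaining component `λ'` of `C'ᶜ` by a
rotation of `ρ`. On `[p, q]` the complements of `C` and `C'` agree, so the connected set
`λ' ∩ [p, q]` lies in a single component of `Cᶜ`, where `ρ` is one 2-rotation; use that one for
`λ'`. Components of `C'ᶜ` that miss `[p, q] \ C` get an arbitrary 2-rotation of `ρ`, which exists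
because the compact set `C` is not the whole axis. -/

variable {d : ℕ} {e1 : Euc d}

open Classical in
def multirotationOfComponents (e1 : Euc d) (C : Set ℝ) (F : Set ℝ → Euc d ≃ₗᵢ[ℝ] Euc d)
    (x : Euc d) : Euc d :=
  if ⟪x, e1⟫ ∈ C then x else F (connectedComponentIn Cᶜ ⟪x, e1⟫) x

theorem isMultirotation_multirotationOfComponents {C : Set ℝ}
    {F : Set ℝ → Euc d ≃ₗᵢ[ℝ] Euc d} (hF : ∀ L, IsTwoRotation e1 (F L)) :
    IsMultirotation e1 C (multirotationOfComponents e1 C F) := by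
  refine ⟨fun x hx => if_pos hx, fun t _ => ⟨F (connectedComponentIn Cᶜ t), hF _, ?_⟩⟩
  intro x hx
  rw [multirotationOfComponents, if_neg (connectedComponentIn_subset _ _ hx),
    ← connectedComponentIn_eq hx]

theorem IsMultirotation.exists_twoRotation_eqOn {C : Set ℝ} {ρ : Euc d → Euc d}
    (hρ : IsMultirotation e1 C ρ) (hC : C ≠ univ) {S : Set ℝ} (hS : IsPreconnected S)
    (hSC : S ⊆ Cᶜ) :
    ∃ R : Euc d ≃ₗᵢ[ℝ] Euc d, IsTwoRotation e1 R ∧ ∀ x, ⟪x, e1⟫ ∈ S → ρ x = R x := by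
  rcases S.eq_empty_or_nonempty with rfl | ⟨s, hs⟩
  · obtain ⟨t, ht⟩ := (ne_univ_iff_exists_notMem C).mp hC
    obtain ⟨R, hR, -⟩ := hρ.2 t ht
    exact ⟨R, hR, fun _ h => h.elim⟩
  · obtain ⟨R, hR, hρR⟩ := hρ.2 s (hSC hs)
    exact ⟨R, hR, fun x hx => hρR x (hS.subset_connectedComponentIn hs hSC hx)⟩

theorem stmt14 {d : ℕ} (e1 : Euc d)
    (C C' : Set ℝ) (hC : IsCompact C)
    (p q : ℝ) (hcap : C ∩ Set.Icc p q = C' ∩ Set.Icc p q)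
    (ρ : Euc d → Euc d) (hρ : IsMultirotation e1 C ρ) :
    ∃ ρ' : Euc d → Euc d, IsMultirotation e1 C' ρ' ∧
      ∀ x : Euc d, ⟪x, e1⟫ ∈ Set.Icc p q → ρ x = ρ' x := by
  have hrot : ∀ L : Set ℝ, ∃ R : Euc d ≃ₗᵢ[ℝ] Euc d, IsTwoRotation e1 R ∧
      (L ⊆ C'ᶜ → IsPreconnected L → ∀ x, ⟪x, e1⟫ ∈ L ∩ Icc p q → ρ x = R x) := by
    intro L
    by_cases hL : L ⊆ C'ᶜ ∧ IsPreconnected L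
    · have hLI : L ∩ Icc p q ⊆ Cᶜ := fun u hu huC =>
        hL.1 hu.1 (hcap.subset ⟨huC, hu.2⟩).1
      obtain ⟨R, hR, hρR⟩ := hρ.exists_twoRotation_eqOn hC.ne_univ
        (hL.2.ordConnected.inter ordConnected_Icc).isPreconnected hLI
      exact ⟨R, hR, fun _ _ => hρR⟩
    · obtain ⟨R, hR, -⟩ := hρ.exists_twoRotation_eqOn hC.ne_univ isPreconnected_empty
        (empty_subset _)
      exact ⟨R, hR, fun h₁ h₂ => (hL ⟨h₁, h₂⟩).elim⟩
  choose F hF hρF using hrot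
  refine ⟨multirotationOfComponents e1 C' F, isMultirotation_multirotationOfComponents hF, ?_⟩
  intro x hx
  by_cases hxC' : ⟪x, e1⟫ ∈ C'
  · rw [multirotationOfComponents, if_pos hxC']
    exact hρ.1 x (hcap.symm.subset ⟨hxC', hx⟩).1
  · rw [multirotationOfComponents, if_neg hxC']
    exact hρF _ (connectedComponentIn_subset _ _) isPreconnected_connectedComponentIn x
      ⟨mem_connectedComponentIn hxC', hx⟩
end
end

section
/- Let u be a unit vector in ℝ^d and f : u^⊥ → ℝ a Lipschitz function. If f is semiconcave on u^⊥ ∩ B(w₀, δ) for some δ > 0, where w₀ = π_{u^⊥}(a) and a ∈ ∂(hyp_u f), then reach(hyp_u f, a) > 0. -/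
open Metric Set MeasureTheory
open scoped RealInnerProductSpace ENNReal NNReal

noncomputable section

/-- The `u`-hypograph of a function defined on the hyperplane `u^⊥`. -/
def hypographOn {d : ℕ} (u : Euc d)
    (f : ((Submodule.span ℝ {u})ᗮ : Submodule ℝ (Euc d)) → ℝ) : Set (Euc d) :=
  {x | ∃ (w : ((Submodule.span ℝ {u})ᗮ : Submodule ℝ (Euc d))) (t : ℝ),
    t ≤ f w ∧ x = (w : Euc d) + t • u}

/-! A point `x` near `a` has a unique nearest point in `A = hyp_u f` as soon as every nearest
point `b` satisfies `2r ⟪x - b, p - b⟫ ≤ |x - b| |p - b|²` for all `p ∈ A`, with `|x - b| < r`.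
For `|p - b| ≥ 2r` this is Cauchy–Schwarz. For `p` close to `b`, write `x = y + s u`: the nearest
point lies on the graph, `b = w + f(w) u` with `f(w) ≤ s`, and minimality of `|x - b|` together
with the Lipschitz bound makes `⟪y - w, ·⟫ + (s - f w) f` bounded above by a quadratic at `w`.
Semiconcavity improves the constant of that quadratic to `(s - f w) c / 2`, which gives the
inequality for `r ≲ min (δ, 1 / c)`. -/

open Filter Topology

section InnerProductSpace

variable {E : Type*} [NormedAddCommGroup E] [InnerProductSpace ℝ E] {u : E}

/- Compare the two bounds at `(1 - τ) • w + τ • w'` and let `τ → 0⁺`. -/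
lemma sub_le_of_concaveOn_sub_sq {S : Set E} {φ : E → ℝ} {k L : ℝ}
    (hφ : ConcaveOn ℝ S fun x => φ x - k / 2 * ‖x‖ ^ 2) {w w' : E} (hw : w ∈ S) (hw' : w' ∈ S)
    (hL : ∀ z ∈ S, φ z - φ w ≤ L * ‖z - w‖ ^ 2) :
    φ w' - φ w ≤ k / 2 * ‖w' - w‖ ^ 2 := by
  have hstrong : StrongConcaveOn S (-k) φ :=
    strongConcaveOn_iff_convex.2 (by simpa only [neg_div, neg_mul, ← sub_eq_add_neg] using hφ)
  have hsegment : ∀ τ ∈ Ioo (0 : ℝ) 1,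
      φ w' - φ w - k / 2 * ‖w' - w‖ ^ 2 ≤ τ * ((L - k / 2) * ‖w' - w‖ ^ 2) := by
    rintro τ ⟨hτ0, hτ1⟩
    have hconc := hstrong.2 hw hw' (sub_nonneg.2 hτ1.le) hτ0.le (by ring)
    have hmem : (1 - τ) • w + τ • w' ∈ S := hstrong.1 hw hw' (sub_nonneg.2 hτ1.le) hτ0.le (by ring)
    have hquad := hL _ hmem
    have hstep : (1 - τ) • w + τ • w' - w = τ • (w' - w) := by module
    rw [hstep, norm_smul, Real.norm_of_nonneg hτ0.le] at hquad
    rw [norm_sub_rev w w'] at hconc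
    simp only [smul_eq_mul] at hconc
    nlinarith
  have hlim : Tendsto (fun τ : ℝ => τ * ((L - k / 2) * ‖w' - w‖ ^ 2)) (𝓝[>] 0) (𝓝 0) :=
    tendsto_nhdsWithin_of_tendsto_nhds (Continuous.tendsto' (by fun_prop) 0 0 (by simp))
  linarith [ge_of_tendsto hlim (eventually_of_mem (Ioo_mem_nhdsGT one_pos) hsegment)]

lemma two_mul_inner_le_of_le_norm {r : ℝ} {x b p : E} (hr : 0 ≤ r) (hp : 2 * r ≤ ‖p - b‖) :
    2 * r * ⟪x - b, p - b⟫ ≤ ‖x - b‖ * ‖p - b‖ ^ 2 :=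
  calc 2 * r * ⟪x - b, p - b⟫ ≤ 2 * r * (‖x - b‖ * ‖p - b‖) := by
        gcongr; exact real_inner_le_norm _ _
    _ ≤ ‖p - b‖ * (‖x - b‖ * ‖p - b‖) := by gcongr
    _ = ‖x - b‖ * ‖p - b‖ ^ 2 := by ring

lemma orthogonalProjectionOnto_add_inner_smul (hu : ‖u‖ = 1) (x : E) :
    ((ℝ ∙ u)ᗮ.orthogonalProjectionOnto x : E) + ⟪x, u⟫ • u = x := by
  have h := (ℝ ∙ u).starProjection_add_starProjection_orthogonal x
  rwa [Submodule.starProjection_unit_singleton ℝ hu, real_inner_comm, add_comm] at h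

lemma orthogonalProjectionOnto_add_smul (w : (ℝ ∙ u)ᗮ) (t : ℝ) :
    (ℝ ∙ u)ᗮ.orthogonalProjectionOnto ((w : E) + t • u) = w := by
  rw [map_add, map_smul, Submodule.orthogonalProjectionOnto_mem_subspace_eq_self,
    Submodule.orthogonalProjectionOnto_orthogonalComplement_singleton_eq_zero, smul_zero, add_zero]

lemma inner_add_smul_self (hu : ‖u‖ = 1) (w : (ℝ ∙ u)ᗮ) (t : ℝ) :
    ⟪(w : E) + t • u, u⟫ = t := by
  rw [inner_add_left, Submodule.mem_orthogonal_singleton_iff_inner_left.1 w.2,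
    real_inner_smul_left, real_inner_self_eq_norm_sq, hu]
  ring

lemma inner_eq_inner_orthogonalProjectionOnto_add_mul (hu : ‖u‖ = 1) (x y : E) :
    ⟪x, y⟫ = ⟪(ℝ ∙ u)ᗮ.orthogonalProjectionOnto x, (ℝ ∙ u)ᗮ.orthogonalProjectionOnto y⟫
      + ⟪x, u⟫ * ⟪y, u⟫ := by
  have horth (z : E) : ⟪((ℝ ∙ u)ᗮ.orthogonalProjectionOnto z : E), u⟫ = 0 :=
    Submodule.mem_orthogonal_singleton_iff_inner_left.1 (Submodule.coe_mem _)
  have horth' (z : E) : ⟪u, ((ℝ ∙ u)ᗮ.orthogonalProjectionOnto z : E)⟫ = 0 := by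
    rw [real_inner_comm, horth]
  conv_lhs => rw [← orthogonalProjectionOnto_add_inner_smul hu x,
    ← orthogonalProjectionOnto_add_inner_smul hu y]
  simp only [inner_add_left, inner_add_right, real_inner_smul_left, real_inner_smul_right,
    horth, horth', Submodule.coe_inner, real_inner_self_eq_norm_sq, hu]
  ring

lemma norm_sub_sq_eq_orthogonalProjectionOnto_add (hu : ‖u‖ = 1) (x y : E) :
    ‖x - y‖ ^ 2 = ‖(ℝ ∙ u)ᗮ.orthogonalProjectionOnto x - (ℝ ∙ u)ᗮ.orthogonalProjectionOnto y‖ ^ 2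
      + (⟪x, u⟫ - ⟪y, u⟫) ^ 2 := by
  rw [← real_inner_self_eq_norm_sq, ← real_inner_self_eq_norm_sq,
    inner_eq_inner_orthogonalProjectionOnto_add_mul hu, map_sub, inner_sub_left x y u]
  ring

end InnerProductSpace

section Hypograph

variable {d : ℕ} {u : Euc d} {f : (ℝ ∙ u)ᗮ → ℝ}

lemma mem_hypographOn_iff (hu : ‖u‖ = 1) {x : Euc d} :
    x ∈ hypographOn u f ↔ ⟪x, u⟫ ≤ f ((ℝ ∙ u)ᗮ.orthogonalProjectionOnto x) := by
  constructor
  · rintro ⟨w, t, ht, rfl⟩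
    rwa [inner_add_smul_self hu, orthogonalProjectionOnto_add_smul]
  · exact fun h => ⟨_, _, h, (orthogonalProjectionOnto_add_inner_smul hu x).symm⟩

lemma isClosed_hypographOn (hu : ‖u‖ = 1) (hf : Continuous f) : IsClosed (hypographOn u f) := by
  have : hypographOn u f = {x | ⟪x, u⟫ ≤ f ((ℝ ∙ u)ᗮ.orthogonalProjectionOnto x)} :=
    Set.ext fun _ => mem_hypographOn_iff hu
  rw [this]
  exact isClosed_le (by fun_prop) (hf.comp (ContinuousLinearMap.continuous _))

lemma hypographOn_norm_sub_sq_add_le (hu : ‖u‖ = 1) {x b : Euc d}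
    (hbx : ∀ p ∈ hypographOn u f, dist x b ≤ dist x p) {w : (ℝ ∙ u)ᗮ} {t : ℝ} (ht : t ≤ f w) :
    ‖(ℝ ∙ u)ᗮ.orthogonalProjectionOnto x - (ℝ ∙ u)ᗮ.orthogonalProjectionOnto b‖ ^ 2
        + (⟪x, u⟫ - ⟪b, u⟫) ^ 2
      ≤ ‖(ℝ ∙ u)ᗮ.orthogonalProjectionOnto x - w‖ ^ 2 + (⟪x, u⟫ - t) ^ 2 := by
  have hdist := norm_sub_sq_eq_orthogonalProjectionOnto_add hu x ((w : Euc d) + t • u)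
  rw [orthogonalProjectionOnto_add_smul, inner_add_smul_self hu] at hdist
  rw [← norm_sub_sq_eq_orthogonalProjectionOnto_add hu, ← hdist, ← dist_eq_norm, ← dist_eq_norm]
  gcongr
  exact hbx _ ⟨w, t, ht, rfl⟩

/- If `f w > s` for `b = w + t u` and `x = y + s u`, then `t = s`, and moving `w` slightly
towards `y` would stay in the hypograph and get closer to `x`. -/
lemma hypographOn_inner_eq_of_forall_dist_le (hu : ‖u‖ = 1) (hf : Continuous f) {x b : Euc d}
    (hx : x ∉ hypographOn u f) (hb : b ∈ hypographOn u f)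
    (hbx : ∀ p ∈ hypographOn u f, dist x b ≤ dist x p) :
    ⟪b, u⟫ = f ((ℝ ∙ u)ᗮ.orthogonalProjectionOnto b) ∧
      f ((ℝ ∙ u)ᗮ.orthogonalProjectionOnto b) ≤ ⟪x, u⟫ := by
  set y := (ℝ ∙ u)ᗮ.orthogonalProjectionOnto x
  set w := (ℝ ∙ u)ᗮ.orthogonalProjectionOnto b
  have hbw : ⟪b, u⟫ ≤ f w := (mem_hypographOn_iff hu).1 hb
  have hxy : f y < ⟪x, u⟫ := not_le.1 fun h => hx ((mem_hypographOn_iff hu).2 h)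
  have hwx : f w ≤ ⟪x, u⟫ := by
    by_contra! hxw
    have hcont : Continuous fun τ : ℝ => f (w + τ • (y - w)) := by fun_prop
    have hev : ∀ᶠ τ in 𝓝[>] (0 : ℝ), ⟪x, u⟫ ≤ f (w + τ • (y - w)) :=
      nhdsWithin_le_nhds (((hcont.tendsto 0).eventually_const_lt (by simpa using hxw)).mono
        fun _ => le_of_lt)
    obtain ⟨τ, hτ, hτ0, hτ1⟩ := (hev.and (Ioo_mem_nhdsGT one_pos)).exists
    have hcloser := hypographOn_norm_sub_sq_add_le hu hbx hτ
    have hstep : y - (w + τ • (y - w)) = (1 - τ) • (y - w) := by module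
    rw [hstep, norm_smul, Real.norm_of_nonneg (by linarith), sub_self] at hcloser
    have hyw : ‖y - w‖ ^ 2 = 0 := by
      nlinarith [sq_nonneg (⟪x, u⟫ - ⟪b, u⟫), sq_nonneg ‖y - w‖, mul_pos hτ0 (sub_pos.2 hτ1)]
    rw [sq_eq_zero_iff, norm_eq_zero, sub_eq_zero] at hyw
    rw [hyw] at hxy
    exact (lt_asymm hxy hxw).elim
  refine ⟨?_, hwx⟩
  have hgraph := hypographOn_norm_sub_sq_add_le hu hbx (le_refl (f w))
  nlinarith

lemma hypographOn_inner_add_mul_le (hu : ‖u‖ = 1) {K : ℝ≥0} (hK : LipschitzWith K f)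
    {x b : Euc d} (hbx : ∀ p ∈ hypographOn u f, dist x b ≤ dist x p)
    (hbf : ⟪b, u⟫ = f ((ℝ ∙ u)ᗮ.orthogonalProjectionOnto b)) (w' : (ℝ ∙ u)ᗮ) :
    ⟪(ℝ ∙ u)ᗮ.orthogonalProjectionOnto x - (ℝ ∙ u)ᗮ.orthogonalProjectionOnto b,
        w' - (ℝ ∙ u)ᗮ.orthogonalProjectionOnto b⟫
      + (⟪x, u⟫ - f ((ℝ ∙ u)ᗮ.orthogonalProjectionOnto b))
        * (f w' - f ((ℝ ∙ u)ᗮ.orthogonalProjectionOnto b))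
      ≤ (1 + K ^ 2) / 2 * ‖w' - (ℝ ∙ u)ᗮ.orthogonalProjectionOnto b‖ ^ 2 := by
  have hnear := hypographOn_norm_sub_sq_add_le hu hbx (le_refl (f w'))
  set y := (ℝ ∙ u)ᗮ.orthogonalProjectionOnto x
  set w := (ℝ ∙ u)ᗮ.orthogonalProjectionOnto b
  have hsplit : y - w' = (y - w) - (w' - w) := by abel
  rw [hsplit, norm_sub_sq_real (y - w) (w' - w), hbf] at hnear
  have hlip : (f w' - f w) ^ 2 ≤ K ^ 2 * ‖w' - w‖ ^ 2 := by
    rw [← mul_pow, ← sq_abs, ← Real.dist_eq, ← dist_eq_norm]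
    gcongr
    exact hK.dist_le_mul w' w
  nlinarith

lemma hypographOn_inner_le_of_mem_ball (hu : ‖u‖ = 1) {K : ℝ≥0} (hK : LipschitzWith K f)
    {c δ : ℝ} (hc : 0 ≤ c) {w₀ : (ℝ ∙ u)ᗮ}
    (hconc : ConcaveOn ℝ (ball w₀ δ) fun w => f w - c / 2 * ‖w‖ ^ 2)
    {x b p : Euc d} (hx : x ∉ hypographOn u f) (hb : b ∈ hypographOn u f)
    (hbx : ∀ p ∈ hypographOn u f, dist x b ≤ dist x p) (hp : p ∈ hypographOn u f)
    (hbδ : (ℝ ∙ u)ᗮ.orthogonalProjectionOnto b ∈ ball w₀ δ)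
    (hpδ : (ℝ ∙ u)ᗮ.orthogonalProjectionOnto p ∈ ball w₀ δ) :
    ⟪x - b, p - b⟫ ≤ c / 2 * dist x b * ‖p - b‖ ^ 2 := by
  obtain ⟨hbf, hbx'⟩ := hypographOn_inner_eq_of_forall_dist_le hu hK.continuous hx hb hbx
  have hprox := hypographOn_inner_add_mul_le hu hK hbx hbf
  have hpf := (mem_hypographOn_iff hu).1 hp
  have hxb := norm_sub_sq_eq_orthogonalProjectionOnto_add hu x b
  have hpb := norm_sub_sq_eq_orthogonalProjectionOnto_add hu p b
  have hinner := inner_eq_inner_orthogonalProjectionOnto_add_mul hu (x - b) (p - b)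
  rw [map_sub, map_sub, inner_sub_left x b u, inner_sub_left p b u, hbf] at hinner
  rw [hbf] at hxb
  set y := (ℝ ∙ u)ᗮ.orthogonalProjectionOnto x
  set w := (ℝ ∙ u)ᗮ.orthogonalProjectionOnto b
  set v := (ℝ ∙ u)ᗮ.orthogonalProjectionOnto p
  set m := ⟪x, u⟫ - f w
  have hm : 0 ≤ m := sub_nonneg.2 hbx'
  have hφ : ConcaveOn ℝ (ball w₀ δ) fun z => (⟪y - w, z⟫ + m * f z) - m * c / 2 * ‖z‖ ^ 2 := by
    refine (((innerSL ℝ (y - w) : (ℝ ∙ u)ᗮ →ₗ[ℝ] ℝ).concaveOn (convex_ball w₀ δ)).add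
      (hconc.smul hm)).congr fun z _ => ?_
    simp only [Pi.add_apply, smul_eq_mul, ContinuousLinearMap.coe_coe, innerSL_apply_apply]
    ring
  have hsemi := sub_le_of_concaveOn_sub_sq hφ hbδ hpδ (L := (1 + K ^ 2) / 2) fun z _ => by
    have := hprox z
    rw [inner_sub_right] at this
    linarith
  have hmx : m ≤ dist x b := by
    rw [dist_eq_norm]
    nlinarith [norm_nonneg (x - b), sq_nonneg ‖y - w‖]
  have hvw : ‖v - w‖ ^ 2 ≤ ‖p - b‖ ^ 2 := by
    rw [hpb]
    nlinarith [sq_nonneg (⟪p, u⟫ - ⟪b, u⟫)]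
  rw [hinner]
  calc ⟪y - w, v - w⟫ + m * (⟪p, u⟫ - f w) ≤ ⟪y - w, v - w⟫ + m * (f v - f w) := by gcongr
    _ ≤ c / 2 * m * ‖v - w‖ ^ 2 := by rw [inner_sub_right]; linarith
    _ ≤ c / 2 * dist x b * ‖p - b‖ ^ 2 := by gcongr

lemma hypographOn_two_mul_inner_le (hu : ‖u‖ = 1) {K : ℝ≥0} (hK : LipschitzWith K f)
    {c δ : ℝ} (hc : 0 ≤ c) {w₀ : (ℝ ∙ u)ᗮ}
    (hconc : ConcaveOn ℝ (ball w₀ δ) fun w => f w - c / 2 * ‖w‖ ^ 2)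
    {r : ℝ} (hr : 0 ≤ r) (hrc : r * c ≤ 1) {x b : Euc d} (hb : b ∈ hypographOn u f)
    (hbx : ∀ p ∈ hypographOn u f, dist x b ≤ dist x p)
    (hbδ : dist ((ℝ ∙ u)ᗮ.orthogonalProjectionOnto b) w₀ + 2 * r ≤ δ)
    {p : Euc d} (hp : p ∈ hypographOn u f) :
    2 * r * ⟪x - b, p - b⟫ ≤ dist x b * ‖p - b‖ ^ 2 := by
  by_cases hx : x ∈ hypographOn u f
  · obtain rfl : x = b := dist_le_zero.1 (by simpa using hbx x hx)
    simp
  rcases lt_or_ge ‖p - b‖ (2 * r) with hnear | hfar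
  · set P := (ℝ ∙ u)ᗮ.orthogonalProjectionOnto
    have hPpb : dist (P p) (P b) ≤ ‖p - b‖ := by
      rw [← dist_eq_norm]
      have := (Submodule.lipschitzWith_orthogonalProjectionOnto (ℝ ∙ u)ᗮ).dist_le_mul p b
      rwa [NNReal.coe_one, one_mul] at this
    have hbδ' : P b ∈ ball w₀ δ := mem_ball.2 (by linarith [norm_nonneg (p - b)])
    have hpδ : P p ∈ ball w₀ δ := mem_ball.2 (by linarith [dist_triangle (P p) (P b) w₀])
    have hDN : 0 ≤ dist x b * ‖p - b‖ ^ 2 := by positivity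
    calc 2 * r * ⟪x - b, p - b⟫
        ≤ 2 * r * (c / 2 * dist x b * ‖p - b‖ ^ 2) := by
          gcongr
          exact hypographOn_inner_le_of_mem_ball hu hK hc hconc hx hb hbx hp hbδ' hpδ
      _ = r * c * (dist x b * ‖p - b‖ ^ 2) := by ring
      _ ≤ dist x b * ‖p - b‖ ^ 2 := mul_le_of_le_one_left hDN hrc
  · rw [dist_eq_norm]
    exact two_mul_inner_le_of_le_norm hr hfar

end Hypograph

section Reach

variable {d : ℕ}

/- Adding the inequality for two nearest points `b, b'` gives
`2r‖b - b'‖² ≤ 2 infDist x A ‖b - b'‖²`, which forces `b = b'` since `infDist x A < r`. -/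
lemma mem_unp_of_two_mul_inner_le {A : Set (Euc d)} (hA : IsClosed A) (hne : A.Nonempty)
    {x : Euc d} {r : ℝ} (hr : infDist x A < r)
    (h : ∀ b ∈ A, (∀ p ∈ A, dist x b ≤ dist x p) →
      ∀ p ∈ A, 2 * r * ⟪x - b, p - b⟫ ≤ dist x b * ‖p - b‖ ^ 2) :
    x ∈ unp A := by
  have hnearest : ∀ b, dist x b = infDist x A → ∀ p ∈ A, dist x b ≤ dist x p :=
    fun b hb p hp => hb ▸ infDist_le_dist_of_mem hp
  obtain ⟨b, hb, hbd⟩ := hA.exists_infDist_eq_dist hne x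
  refine ⟨b, ⟨hb, hbd.symm⟩, fun b' ⟨hb', hb'd⟩ => ?_⟩
  have h₁ := h b hb (hnearest b hbd.symm) b' hb'
  have h₂ := h b' hb' (hnearest b' hb'd) b hb
  rw [← hbd] at h₁
  rw [hb'd, norm_sub_rev b b'] at h₂
  have hsum : ⟪x - b, b' - b⟫ + ⟪x - b', b - b'⟫ = ‖b' - b‖ ^ 2 := by
    rw [← real_inner_self_eq_norm_sq, ← neg_sub b' b, inner_neg_right, ← sub_eq_add_neg,
      ← inner_sub_left]
    congr 1
    abel
  have hzero : ‖b' - b‖ ^ 2 = 0 := by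
    nlinarith [sq_nonneg ‖b' - b‖, dist_nonneg (x := x) (y := b)]
  rwa [sq_eq_zero_iff, norm_eq_zero, sub_eq_zero] at hzero

lemma reachAt_pos_of_forall_dist_lt {A : Set (Euc d)} {a : Euc d} {ρ : ℝ} (hρ : 0 < ρ)
    (h : ∀ x, dist x a < ρ → x ∈ unp A) : 0 < reachAt A a :=
  (ENNReal.ofReal_pos.2 hρ).trans_le <| le_sSup fun x hx =>
    h x (by rwa [edist_dist, ENNReal.ofReal_lt_ofReal_iff_of_nonneg dist_nonneg] at hx)

end Reach

theorem stmt15 {d : ℕ} (u : Euc d) (hu : ‖u‖ = 1)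
    (f : ((Submodule.span ℝ {u})ᗮ : Submodule ℝ (Euc d)) → ℝ)
    (hf : ∃ K : ℝ≥0, LipschitzWith K f)
    (a : Euc d) (ha : a ∈ frontier (hypographOn u f))
    (δ : ℝ) (hδ : 0 < δ)
    (hsc : ∃ c : ℝ, 0 ≤ c ∧
      ConcaveOn ℝ (Metric.ball (Submodule.orthogonalProjection (Submodule.span ℝ {u})ᗮ a) δ)
        (fun w => f w - c / 2 * ‖w‖ ^ 2)) :
    0 < reachAt (hypographOn u f) a := by
  obtain ⟨K, hK⟩ := hf
  obtain ⟨c, hc, hconc⟩ := hsc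
  have hA := isClosed_hypographOn hu hK.continuous
  have haA : a ∈ hypographOn u f := hA.frontier_subset ha
  set r := min (δ / 4) (c + 1)⁻¹
  have hr : 0 < r := lt_min (by positivity) (by positivity)
  have hrc : r * c ≤ 1 :=
    calc r * c ≤ (c + 1)⁻¹ * (c + 1) :=
          mul_le_mul (min_le_right _ _) (by linarith) hc (by positivity)
      _ = 1 := inv_mul_cancel₀ (by positivity)
  refine reachAt_pos_of_forall_dist_lt (half_pos hr) fun x hx => ?_
  have hxA : infDist x (hypographOn u f) < r := (infDist_le_dist_of_mem haA).trans_lt (by linarith)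
  refine mem_unp_of_two_mul_inner_le hA ⟨a, haA⟩ hxA fun b hb hbx p hp => ?_
  refine hypographOn_two_mul_inner_le hu hK hc hconc hr.le hrc hb hbx ?_ hp
  have hPba := (Submodule.lipschitzWith_orthogonalProjectionOnto (ℝ ∙ u)ᗮ).dist_le_mul b a
  rw [NNReal.coe_one, one_mul] at hPba
  linarith [dist_triangle b x a, dist_comm x b, hbx a haA, min_le_left (δ / 4) (c + 1)⁻¹]
end
end

section
/- Every B₋-set has positive reach. That is: if r > 0, ψ ≤ 0 ≤ φ are Lipschitz functions on [0,r] with φ semiconcave on (0,r), ψ semiconvex on (0,r), φ(0) = ψ(0) = 0, φ′₊(0) = ψ′₊(0) = 0, then the set M = {(x,y) ∈ ℝ² : x ∈ [0,r], ψ(x) ≤ y ≤ φ(x)} has positive reach. -/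
/-!
Write `M` for the region between the graphs of `ψ ≤ φ` over `[0, r]`. Semiconcavity of `φ`
and semiconvexity of `ψ` give midpoint inequalities with an error `c (x - y) ^ 2`, so the
midpoint of two points `a, b ∈ M` lies within `C ‖a - b‖ ^ 2` of `M`: move it vertically into
the fibre of `M` above it. In a Euclidean space a closed set with this property has unique
nearest points at distance `< 1 / (8 C)`: if `a ≠ b` are both nearest to `x` at distance `t`,
Apollonius puts their midpoint at distance `√(t ^ 2 - ‖a - b‖ ^ 2 / 4)` from `x`, and a point
of `M` near that midpoint would be closer to `x` than `t`.
-/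

open Metric Set MeasureTheory
open scoped RealInnerProductSpace ENNReal NNReal

noncomputable section

protected theorem ConcaveOn.closure {E : Type*} [AddCommGroup E] [Module ℝ E]
    [TopologicalSpace E] [IsTopologicalAddGroup E] [ContinuousSMul ℝ E] {s : Set E} {f : E → ℝ}
    (hf : ConcaveOn ℝ s f) (hfc : ContinuousOn f (closure s)) :
    ConcaveOn ℝ (closure s) f := by
  refine ⟨hf.1.closure, fun x hx y hy a b ha hb hab => ?_⟩
  have hmap : MapsTo (fun p : E × E => a • p.1 + b • p.2) (closure (s ×ˢ s)) (closure s) := by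
    rw [closure_prod_eq]
    exact fun p hp => hf.1.closure hp.1 hp.2 ha hb hab
  refine le_on_closure (f := fun p : E × E => a • f p.1 + b • f p.2)
    (g := fun p => f (a • p.1 + b • p.2)) (fun p hp => hf.2 hp.1 hp.2 ha hb hab) ?_
    (hfc.comp (by fun_prop) hmap) (x := (x, y)) (by rw [closure_prod_eq]; exact ⟨hx, hy⟩)
  rw [closure_prod_eq]
  exact ((hfc.comp continuousOn_fst fun p hp => hp.1).const_smul a).add
    ((hfc.comp continuousOn_snd fun p hp => hp.2).const_smul b)

theorem concaveOn_Icc_of_Ioo {a b : ℝ} {f : ℝ → ℝ} (hf : ConcaveOn ℝ (Ioo a b) f)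
    (hfc : ContinuousOn f (Icc a b)) : ConcaveOn ℝ (Icc a b) f := by
  rcases lt_or_ge a b with hab | hba
  · rw [← closure_Ioo hab.ne] at hfc ⊢
    exact hf.closure hfc
  · refine ⟨convex_Icc a b, fun x hx y hy s t _ _ hst => ?_⟩
    obtain rfl := subsingleton_Icc_of_ge hba hx hy
    rw [← add_smul, ← add_smul, hst, one_smul, one_smul]

theorem ConcaveOn.average_le_midpoint_add_sq {s : Set ℝ} {f : ℝ → ℝ} {c : ℝ}
    (hf : ConcaveOn ℝ s fun x => f x - c / 2 * x ^ 2) {x y : ℝ} (hx : x ∈ s) (hy : y ∈ s) :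
    (f x + f y) / 2 ≤ f ((x + y) / 2) + c / 8 * (x - y) ^ 2 := by
  have h := hf.2 hx hy (by norm_num : (0 : ℝ) ≤ 1 / 2) (by norm_num : (0 : ℝ) ≤ 1 / 2)
    (by norm_num)
  simp only [smul_eq_mul] at h
  rw [show 1 / 2 * x + 1 / 2 * y = (x + y) / 2 by ring] at h
  linarith

theorem exists_mem_Icc_abs_sub_le {lo hi y ε : ℝ} (hle : lo ≤ hi) (hε : 0 ≤ ε)
    (hlo : lo ≤ y + ε) (hhi : y ≤ hi + ε) : ∃ w ∈ Icc lo hi, |w - y| ≤ ε := by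
  refine ⟨max lo (min hi y), ⟨le_max_left _ _, max_le hle (min_le_left _ _)⟩, ?_⟩
  grind

def closedRegionBetween (lo hi : ℝ → ℝ) (I : Set ℝ) : Set (Euc 2) :=
  {z | z 0 ∈ I ∧ lo (z 0) ≤ z 1 ∧ z 1 ≤ hi (z 0)}

theorem isClosed_closedRegionBetween {lo hi : ℝ → ℝ} {I : Set ℝ} (hI : IsClosed I)
    (hlo : ContinuousOn lo I) (hhi : ContinuousOn hi I) :
    IsClosed (closedRegionBetween lo hi I) := by
  have hproj : Continuous fun z : Euc 2 => z 0 := (EuclideanSpace.proj 0).continuous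
  have hS : IsClosed {z : Euc 2 | z 0 ∈ I} := hI.preimage hproj
  have hlo' : ContinuousOn (fun z : Euc 2 => lo (z 0)) {z | z 0 ∈ I} :=
    hlo.comp hproj.continuousOn fun _ hz => hz
  have hhi' : ContinuousOn (fun z : Euc 2 => hi (z 0)) {z | z 0 ∈ I} :=
    hhi.comp hproj.continuousOn fun _ hz => hz
  have hsnd : ContinuousOn (fun z : Euc 2 => z 1) {z | z 0 ∈ I} :=
    (EuclideanSpace.proj 1).continuous.continuousOn
  have := (hS.isClosed_le hlo' hsnd).isClosed_le (hsnd.mono fun _ hz => hz.1)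
    (hhi'.mono fun _ hz => hz.1)
  convert this using 1
  ext z
  simp [closedRegionBetween, and_assoc]

def AlmostMidpointConvex {E : Type*} [NormedAddCommGroup E] [NormedSpace ℝ E] (C : ℝ)
    (s : Set E) : Prop :=
  ∀ a ∈ s, ∀ b ∈ s, ∃ m ∈ s, dist m (midpoint ℝ a b) ≤ C * dist a b ^ 2

theorem almostMidpointConvex_closedRegionBetween {lo hi : ℝ → ℝ} {I : Set ℝ} {K : ℝ}
    (hI : Convex ℝ I) (hK : 0 ≤ K) (hle : ∀ x ∈ I, lo x ≤ hi x)
    (hlo : ∀ x ∈ I, ∀ y ∈ I, lo ((x + y) / 2) ≤ (lo x + lo y) / 2 + K * (x - y) ^ 2)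
    (hhi : ∀ x ∈ I, ∀ y ∈ I, (hi x + hi y) / 2 ≤ hi ((x + y) / 2) + K * (x - y) ^ 2) :
    AlmostMidpointConvex K (closedRegionBetween lo hi I) := by
  rintro a ⟨ha, hlo_a, hhi_a⟩ b ⟨hb, hlo_b, hhi_b⟩
  have hmid : ∀ i, midpoint ℝ a b i = (a i + b i) / 2 := fun i => by
    simp only [midpoint_eq_smul_add, invOf_eq_inv, smul_add, PiLp.add_apply, PiLp.smul_apply,
      smul_eq_mul]
    ring
  have hx : (a 0 + b 0) / 2 ∈ I := by
    convert hI ha hb (by norm_num : (0 : ℝ) ≤ 1 / 2) (by norm_num : (0 : ℝ) ≤ 1 / 2)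
      (by norm_num) using 1
    simp only [smul_eq_mul]
    ring
  obtain ⟨w, ⟨hw_lo, hw_hi⟩, hw⟩ := exists_mem_Icc_abs_sub_le (y := (a 1 + b 1) / 2)
    (hle _ hx) (mul_nonneg hK (sq_nonneg (a 0 - b 0)))
    (by linarith [hlo _ ha _ hb]) (by linarith [hhi _ ha _ hb])
  refine ⟨!₂[(a 0 + b 0) / 2, w], ⟨hx, hw_lo, hw_hi⟩, ?_⟩
  have hdist : dist !₂[(a 0 + b 0) / 2, w] (midpoint ℝ a b) = |w - (a 1 + b 1) / 2| := by
    rw [EuclideanSpace.dist_eq, Fin.sum_univ_two]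
    simp [hmid, Real.dist_eq, Real.sqrt_sq_eq_abs]
  have hab : (a 0 - b 0) ^ 2 ≤ dist a b ^ 2 := by
    rw [← sq_abs, ← Real.dist_eq]
    exact pow_le_pow_left₀ dist_nonneg (PiLp.dist_apply_le a b 0) 2
  rw [hdist]
  exact hw.trans (mul_le_mul_of_nonneg_left hab hK)

theorem AlmostMidpointConvex.eq_of_dist_eq_infDist {E : Type*} [NormedAddCommGroup E]
    [InnerProductSpace ℝ E] {C : ℝ} {s : Set E} (hs : AlmostMidpointConvex C s) {x a b : E}
    (ha : a ∈ s) (hb : b ∈ s) (hxa : dist x a = infDist x s) (hxb : dist x b = infDist x s)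
    (hx : 8 * C * infDist x s < 1) : a = b := by
  by_contra hne
  set t := infDist x s
  set δ := dist a b
  have hδ : 0 < δ := dist_pos.mpr hne
  have hδt : δ ≤ 2 * t := by linarith [dist_triangle_left a b x]
  obtain ⟨m', hm's, hm'⟩ := hs a ha b hb
  set m := midpoint ℝ a b
  have happ : dist x m ^ 2 = t ^ 2 - δ ^ 2 / 4 := by
    have := EuclideanGeometry.dist_sq_add_dist_sq_eq_two_mul_dist_midpoint_sq_add_half_dist_sq
      x a b
    rw [hxa, hxb] at this
    linarith
  have hxm : 8 * t * dist x m ≤ 8 * t ^ 2 - δ ^ 2 := by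
    have hrhs : 0 ≤ 8 * t ^ 2 - δ ^ 2 := by nlinarith
    have hlhs : 0 ≤ 8 * t * dist x m := by
      have : 0 ≤ t := infDist_nonneg
      positivity
    refine (sq_le_sq₀ hlhs hrhs).mp ?_
    nlinarith [sq_nonneg (δ ^ 2)]
  have ht : t ≤ dist x m + C * δ ^ 2 :=
    calc t ≤ dist x m' := infDist_le_dist_of_mem hm's
      _ ≤ dist x m + dist m' m := dist_triangle_right x m' m
      _ ≤ dist x m + C * δ ^ 2 := by gcongr
  have hδC : δ ^ 2 ≤ 8 * C * t * δ ^ 2 := by nlinarith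
  nlinarith [mul_pos (sub_pos.mpr hx) (pow_pos hδ 2)]

theorem ofReal_le_reach {d : ℕ} {A : Set (Euc d)} {ρ : ℝ}
    (h : ∀ x, ∀ a ∈ A, dist x a < ρ → x ∈ unp A) : ENNReal.ofReal ρ ≤ reach A :=
  le_iInf₂ fun a ha => le_sSup fun x hx => h x a ha (edist_lt_ofReal.mp hx)

theorem AlmostMidpointConvex.mem_unp {d : ℕ} {A : Set (Euc d)} {C : ℝ}
    (hA : AlmostMidpointConvex C A) (hA_closed : IsClosed A) (hne : A.Nonempty) {x : Euc d}
    (hx : 8 * C * infDist x A < 1) : x ∈ unp A := by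
  obtain ⟨a, ha, hxa⟩ := hA_closed.exists_infDist_eq_dist hne x
  exact ⟨a, ⟨ha, hxa.symm⟩, fun b ⟨hb, hxb⟩ =>
    hA.eq_of_dist_eq_infDist hb ha hxb hxa.symm hx⟩

theorem AlmostMidpointConvex.reach_pos {d : ℕ} {A : Set (Euc d)} {C : ℝ}
    (hA : AlmostMidpointConvex C A) (hA_closed : IsClosed A) : 0 < reach A := by
  obtain ⟨ρ, hρ, hρC⟩ := exists_pos_mul_lt one_pos (8 * |C|)
  refine (ENNReal.ofReal_pos.mpr hρ).trans_le (ofReal_le_reach fun x a ha hxa => ?_)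
  refine hA.mem_unp hA_closed ⟨a, ha⟩ ?_
  calc 8 * C * infDist x A ≤ 8 * |C| * infDist x A := by
        gcongr
        · exact infDist_nonneg
        · exact le_abs_self C
    _ ≤ 8 * |C| * ρ := by gcongr; exact (infDist_le_dist_of_mem ha).trans hxa.le
    _ < 1 := hρC

theorem stmt16_general (r : ℝ) (φ ψ : ℝ → ℝ)
    (horder : ∀ x ∈ Set.Icc 0 r, ψ x ≤ 0 ∧ 0 ≤ φ x)
    (hφLip : ∃ K : ℝ≥0, LipschitzOnWith K φ (Set.Icc 0 r))
    (hψLip : ∃ K : ℝ≥0, LipschitzOnWith K ψ (Set.Icc 0 r))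
    (hφsc : ∃ c : ℝ, 0 ≤ c ∧ ConcaveOn ℝ (Set.Ioo 0 r) (fun x => φ x - c / 2 * x ^ 2))
    (hψsc : ∃ c : ℝ, 0 ≤ c ∧ ConvexOn ℝ (Set.Ioo 0 r) (fun x => ψ x + c / 2 * x ^ 2)) :
    0 < reach {z : Euc 2 | z 0 ∈ Set.Icc 0 r ∧ ψ (z 0) ≤ z 1 ∧ z 1 ≤ φ (z 0)} := by
  obtain ⟨_, hφL⟩ := hφLip
  obtain ⟨_, hψL⟩ := hψLip
  obtain ⟨cφ, hcφ, hφc⟩ := hφsc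
  obtain ⟨cψ, hcψ, hψc⟩ := hψsc
  have hφc' := concaveOn_Icc_of_Ioo hφc (hφL.continuousOn.sub (by fun_prop))
  have hψc' : ConcaveOn ℝ (Icc 0 r) fun x => -ψ x - cψ / 2 * x ^ 2 := by
    refine concaveOn_Icc_of_Ioo ?_ (hψL.continuousOn.neg.sub (by fun_prop))
    exact hψc.neg.congr fun x _ => by simp only [Pi.neg_apply]; ring
  refine AlmostMidpointConvex.reach_pos (C := (cφ + cψ) / 8) ?_
    (isClosed_closedRegionBetween isClosed_Icc hψL.continuousOn hφL.continuousOn)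
  refine almostMidpointConvex_closedRegionBetween (convex_Icc 0 r) (by positivity)
    (fun x hx => (horder x hx).1.trans (horder x hx).2) (fun x hx y hy => ?_)
    (fun x hx y hy => ?_)
  · linarith [hψc'.average_le_midpoint_add_sq hx hy, mul_nonneg hcφ (sq_nonneg (x - y))]
  · linarith [hφc'.average_le_midpoint_add_sq hx hy, mul_nonneg hcψ (sq_nonneg (x - y))]

theorem stmt16 (r : ℝ) (hr : 0 < r) (φ ψ : ℝ → ℝ)
    (horder : ∀ x ∈ Set.Icc 0 r, ψ x ≤ 0 ∧ 0 ≤ φ x)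
    (hφLip : ∃ K : ℝ≥0, LipschitzOnWith K φ (Set.Icc 0 r))
    (hψLip : ∃ K : ℝ≥0, LipschitzOnWith K ψ (Set.Icc 0 r))
    (hφsc : ∃ c : ℝ, 0 ≤ c ∧ ConcaveOn ℝ (Set.Ioo 0 r) (fun x => φ x - c / 2 * x ^ 2))
    (hψsc : ∃ c : ℝ, 0 ≤ c ∧ ConvexOn ℝ (Set.Ioo 0 r) (fun x => ψ x + c / 2 * x ^ 2))
    (hφ0 : φ 0 = 0) (hψ0 : ψ 0 = 0)
    (hφ' : HasDerivWithinAt φ 0 (Set.Icc 0 r) 0)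
    (hψ' : HasDerivWithinAt ψ 0 (Set.Icc 0 r) 0) :
    0 < reach {z : Euc 2 | z 0 ∈ Set.Icc 0 r ∧ ψ (z 0) ≤ z 1 ∧ z 1 ≤ φ (z 0)} :=
  stmt16_general r φ ψ horder hφLip hψLip hφsc hψsc
end
end
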